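/- arXiv:2405.10983 — 5 statements merged into one kernel-verified Lean document; each statement's English description precedes it below -/
import Mathlib

section
/- For any word w = w_1…w_n over the positive integers, the number of inversions of w (pairs i < j with w_i > w_j) has the same distribution over the rearrangement class R(w) as the major index (sum of indices i with w_i > w_{i+1}). That is, the multiset {inv(u) : u ∈ R(w)} equals the multiset {maj(u) : u ∈ R(w)}. -/
/-- Number of inversions of a word: pairs of positions `i < j` with `w_i > w_j`. -/
def wordInv (w : List ℕ) : ℕ :=
  ((Finset.range w.length ×ˢ Finset.range w.length).filter
    (fun p => p.1 < p.2 ∧ w.getD p.2 0 < w.getD p.1 0)).card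

/-- Major index of a word: sum of the (1-based) indices `i` with `w_i > w_{i+1}`. -/
def wordMaj (w : List ℕ) : ℕ :=
  ∑ i ∈ Finset.range (w.length - 1), if w.getD (i + 1) 0 < w.getD i 0 then i + 1 else 0

/-- recursive inversion count -/
def listInv : List ℕ → ℕ
  | [] => 0
  | x :: t => t.countP (fun y => decide (y < x)) + listInv t

/-- cross inversions between two lists -/
def cross (xs ys : List ℕ) : ℕ :=
  (xs.map (fun x => ys.countP (fun y => decide (y < x)))).sum

def lastD (u : List ℕ) : ℕ := u.getD (u.length - 1) 0

lemma listInv_append (xs ys : List ℕ) :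
    listInv (xs ++ ys) = listInv xs + listInv ys + cross xs ys := by
  induction xs with
  | nil => simp [listInv, cross]
  | cons x t ih =>
      simp only [List.cons_append, listInv, ih, cross, List.map_cons, List.sum_cons,
        List.countP_append, List.append_eq] at *
      omega

lemma cross_cons (x : ℕ) (xs ys : List ℕ) :
    cross (x :: xs) ys = ys.countP (fun y => decide (y < x)) + cross xs ys := by
  simp [cross]

lemma cross_append_right (xs ys zs : List ℕ) :
    cross xs (ys ++ zs) = cross xs ys + cross xs zs := by
  induction xs with
  | nil => simp [cross]
  | cons x t ih => simp [cross_cons, ih, List.countP_append]; ring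

lemma cross_perm_right (xs : List ℕ) {ys zs : List ℕ} (h : ys.Perm zs) :
    cross xs ys = cross xs zs := by
  induction xs with
  | nil => simp [cross]
  | cons x t ih => simp [cross_cons, ih, h.countP_eq]

lemma cross_singleton (xs : List ℕ) (b : ℕ) :
    cross xs [b] = xs.countP (fun x => decide (b < x)) := by
  induction xs with
  | nil => simp [cross]
  | cons x t ih => by_cases h : b < x <;> simp [cross_cons, ih, List.countP_cons, h] <;> omega

lemma listInv_snoc (xs : List ℕ) (a : ℕ) :
    listInv (xs ++ [a]) = listInv xs + xs.countP (fun x => decide (a < x)) := by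
  rw [listInv_append, cross_singleton]; simp [listInv]

lemma countP_eq_sum (p : ℕ → Bool) (w : List ℕ) :
    w.countP p = ∑ i ∈ Finset.range w.length, if p (w.getD i 0) then 1 else 0 := by
  induction w with
  | nil => simp
  | cons x t ih =>
      rw [List.countP_cons, List.length_cons, Finset.sum_range_succ']
      simp only [List.getD_cons_succ, List.getD_cons_zero, ih]

lemma wordInv_eq_sum (w : List ℕ) :
    wordInv w = ∑ i ∈ Finset.range w.length, ∑ j ∈ Finset.range w.length,
      if i < j ∧ w.getD j 0 < w.getD i 0 then 1 else 0 := by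
  rw [wordInv, Finset.card_filter, Finset.sum_product]

lemma wordInv_nil : wordInv [] = 0 := by simp [wordInv]

lemma wordInv_snoc (w : List ℕ) (a : ℕ) :
    wordInv (w ++ [a]) = wordInv w + w.countP (fun x => decide (a < x)) := by
  rw [wordInv_eq_sum, wordInv_eq_sum]
  have hlen : (w ++ [a]).length = w.length + 1 := by simp
  rw [hlen]
  rw [Finset.sum_range_succ]
  have h1 : ∀ j ∈ Finset.range (w.length + 1),
      (if w.length < j ∧ (w ++ [a]).getD j 0 < (w ++ [a]).getD w.length 0 then 1 else 0) = 0 := by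
    intro j hj
    simp only [Finset.mem_range] at hj
    have : ¬ (w.length < j ∧ (w ++ [a]).getD j 0 < (w ++ [a]).getD w.length 0) := by
      rintro ⟨h, -⟩; omega
    rw [if_neg this]
  rw [Finset.sum_congr rfl h1, Finset.sum_const_zero, add_zero]
  have h2 : ∀ i ∈ Finset.range w.length,
      (∑ j ∈ Finset.range (w.length + 1),
        if i < j ∧ (w ++ [a]).getD j 0 < (w ++ [a]).getD i 0 then 1 else 0)
      = (∑ j ∈ Finset.range w.length,
          if i < j ∧ w.getD j 0 < w.getD i 0 then 1 else 0)
        + (if a < w.getD i 0 then 1 else 0) := by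
    intro i hi
    simp only [Finset.mem_range] at hi
    rw [Finset.sum_range_succ]
    congr 1
    · apply Finset.sum_congr rfl
      intro j hj
      simp only [Finset.mem_range] at hj
      rw [List.getD_append _ _ _ _ hj, List.getD_append _ _ _ _ hi]
    · rw [List.getD_append _ _ _ _ hi]
      have : (w ++ [a]).getD w.length 0 = a := by
        rw [List.getD_append_right _ _ _ _ (le_refl _)]; simp
      rw [this]
      simp [hi]
  rw [Finset.sum_congr rfl h2, Finset.sum_add_distrib]
  congr 1
  rw [countP_eq_sum]
  apply Finset.sum_congr rfl
  intro i hi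
  simp only [Finset.mem_range] at hi
  by_cases h : a < w.getD i 0 <;> simp [h]

lemma wordInv_eq_listInv (w : List ℕ) : wordInv w = listInv w := by
  induction w using List.reverseRecOn with
  | nil => simp [wordInv_nil, listInv]
  | append_singleton t a ih => rw [wordInv_snoc, listInv_snoc, ih]

lemma lastD_snoc (u : List ℕ) (a : ℕ) : lastD (u ++ [a]) = a := by
  rw [lastD]
  simp only [List.length_append, List.length_singleton]
  rw [Nat.add_sub_cancel, List.getD_append_right _ _ _ _ (le_refl _)]
  simp

lemma lastD_cons (x : ℕ) (v : List ℕ) (h : v ≠ []) : lastD (x :: v) = lastD v := by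
  rw [lastD, lastD]
  have hv : v.length - 1 + 1 = v.length := by
    cases v with
    | nil => exact absurd rfl h
    | cons y t => simp
  have : (x :: v).length - 1 = v.length - 1 + 1 := by simp [hv]
  rw [this, List.getD_cons_succ]

lemma lastD_append (t v : List ℕ) (h : v ≠ []) : lastD (t ++ v) = lastD v := by
  induction t with
  | nil => simp
  | cons x s ih =>
      rw [List.cons_append, lastD_cons, ih]
      intro hc
      exact h (by simpa using (List.append_eq_nil_iff.mp hc).2)

lemma wordMaj_nil : wordMaj [] = 0 := by simp [wordMaj]

lemma wordMaj_singleton (a : ℕ) : wordMaj [a] = 0 := by simp [wordMaj]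

lemma wordMaj_snoc (w : List ℕ) (a : ℕ) (h : w ≠ []) :
    wordMaj (w ++ [a]) = wordMaj w + if a < lastD w then w.length else 0 := by
  have hn : 1 ≤ w.length := List.length_pos_iff.mpr h
  rw [wordMaj, wordMaj]
  have hlen : (w ++ [a]).length - 1 = (w.length - 1) + 1 := by
    simp only [List.length_append, List.length_singleton]; omega
  rw [hlen, Finset.sum_range_succ]
  congr 1
  · apply Finset.sum_congr rfl
    intro i hi
    simp only [Finset.mem_range] at hi
    rw [List.getD_append _ _ _ _ (by omega), List.getD_append _ _ _ _ (by omega)]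
  · have h1 : (w ++ [a]).getD (w.length - 1 + 1) 0 = a := by
      have : w.length - 1 + 1 = w.length := by omega
      rw [this, List.getD_append_right _ _ _ _ (le_refl _)]; simp
    have h2 : (w ++ [a]).getD (w.length - 1) 0 = lastD w := by
      rw [List.getD_append _ _ _ _ (by omega)]; rfl
    rw [h1, h2]
    by_cases hc : a < lastD w <;> simp [hc] <;> omega

/-- Cycle each block (ending at a `P`-letter) to put its last letter first. -/
def gammaAux (P : ℕ → Bool) : List ℕ → List ℕ → List ℕ
  | acc, [] => acc
  | acc, x :: rest =>
      if P x then x :: acc ++ gammaAux P [] rest else gammaAux P (acc ++ [x]) rest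

def gammaP (P : ℕ → Bool) (u : List ℕ) : List ℕ := gammaAux P [] u

lemma gammaAux_perm (P : ℕ → Bool) : ∀ (u acc : List ℕ), (gammaAux P acc u).Perm (acc ++ u) := by
  intro u
  induction u with
  | nil => intro acc; simp [gammaAux]
  | cons x rest ih =>
      intro acc
      rw [gammaAux]
      by_cases h : P x
      · simp only [h, if_true]
        have h1 : (x :: acc ++ gammaAux P [] rest).Perm (x :: acc ++ rest) :=
          List.Perm.append_left (x :: acc) (ih [])
        refine h1.trans ?_
        have : (x :: (acc ++ rest)).Perm (acc ++ x :: rest) := List.perm_middle.symm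
        simpa using this
      · simp only [h, Bool.false_eq_true, if_false]
        have := ih (acc ++ [x])
        refine this.trans ?_
        simp

lemma gammaP_perm (P : ℕ → Bool) (u : List ℕ) : (gammaP P u).Perm u :=
  gammaAux_perm P u []

lemma gammaAux_accum (P : ℕ → Bool) :
    ∀ (t : List ℕ), (∀ y ∈ t, P y = false) → ∀ (c u : List ℕ),
      gammaAux P c (t ++ u) = gammaAux P (c ++ t) u := by
  intro t
  induction t with
  | nil => intro _ c u; simp
  | cons x s ih =>
      intro h c u
      rw [List.cons_append, gammaAux]
      have hx : P x = false := h x (by simp)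
      simp only [hx, Bool.false_eq_true, if_false]
      rw [ih (fun y hy => h y (by simp [hy])) (c ++ [x]) u]
      simp

/-- decomposition into first block -/
lemma exists_block (P : ℕ → Bool) :
    ∀ (u : List ℕ), (∃ x ∈ u, P x = true) →
      ∃ t b rest, u = t ++ b :: rest ∧ (∀ y ∈ t, P y = false) ∧ P b = true := by
  intro u
  induction u with
  | nil => rintro ⟨x, hx, -⟩; simp at hx
  | cons x v ih =>
      intro h
      by_cases hx : P x
      · exact ⟨[], x, v, by simp, by simp, hx⟩
      · obtain ⟨y, hy, hPy⟩ := h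
        have hyv : y ∈ v := by
          rcases List.mem_cons.mp hy with rfl | h'
          · exact absurd hPy (by simpa using hx)
          · exact h'
        obtain ⟨t, b, rest, h1, h2, h3⟩ := ih ⟨y, hyv, hPy⟩
        refine ⟨x :: t, b, rest, by simp [h1], ?_, h3⟩
        intro z hz
        rcases List.mem_cons.mp hz with rfl | h'
        · simpa using hx
        · exact h2 z h'

lemma gammaP_block (P : ℕ → Bool) (t : List ℕ) (b : ℕ) (rest : List ℕ)
    (ht : ∀ y ∈ t, P y = false) (hb : P b = true) :
    gammaP P (t ++ b :: rest) = b :: t ++ gammaP P rest := by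
  rw [gammaP, gammaAux_accum P t ht [] (b :: rest)]
  rw [gammaAux]
  simp [hb, gammaP]

lemma lastD_mem (u : List ℕ) (h : u ≠ []) : lastD u ∈ u := by
  rw [lastD, List.getD_eq_getElem _ _ (by have := List.length_pos_iff.mpr h; omega)]
  exact List.getElem_mem _

/-- full decomposition data for a word whose last letter satisfies `P` -/
lemma decomp (P : ℕ → Bool) (u : List ℕ) (hne : u ≠ []) (hlast : P (lastD u) = true) :
    ∃ t b rest, u = t ++ b :: rest ∧ (∀ y ∈ t, P y = false) ∧ P b = true ∧
      gammaP P u = b :: t ++ gammaP P rest ∧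
      (rest ≠ [] → P (lastD rest) = true) := by
  obtain ⟨t, b, rest, h1, h2, h3⟩ := exists_block P u ⟨lastD u, lastD_mem u hne, hlast⟩
  refine ⟨t, b, rest, h1, h2, h3, h1 ▸ gammaP_block P t b rest h2 h3, ?_⟩
  intro hr
  have : lastD u = lastD rest := by
    rw [h1, lastD_append _ _ (by simp), lastD_cons _ _ hr]
  rwa [this] at hlast

lemma countP_false {p : ℕ → Bool} {l : List ℕ} (h : ∀ y ∈ l, p y = false) :
    l.countP p = 0 := by
  rw [List.countP_eq_zero]
  intro x hx
  simp [h x hx]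

lemma countP_true {p : ℕ → Bool} {l : List ℕ} (h : ∀ y ∈ l, p y = true) :
    l.countP p = l.length := by
  rw [List.countP_eq_length]
  exact h

lemma invA (a : ℕ) : ∀ (n : ℕ) (u : List ℕ), u.length ≤ n → u ≠ [] → lastD u ≤ a →
    listInv (gammaP (fun x => decide (x ≤ a)) u)
      + u.countP (fun y => decide (a < y)) = listInv u := by
  intro n
  induction n with
  | zero => intro u hu hne _; simp at hu; exact absurd hu hne
  | succ n ih =>
      intro u hu hne hlast
      set P : ℕ → Bool := fun x => decide (x ≤ a) with hP
      obtain ⟨t, b, rest, hdec, ht, hb, hg, hrest⟩ :=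
        decomp P u hne (by simp [hP, hlast])
      have htgt : ∀ y ∈ t, a < y := by
        intro y hy; have := ht y hy; simp [hP] at this; omega
      have hba : b ≤ a := by simpa [hP] using hb
      have ht0 : t.countP (fun y => decide (y < b)) = 0 :=
        countP_false (by intro y hy; have := htgt y hy; simp; omega)
      have htlen : t.countP (fun y => decide (a < y)) = t.length :=
        countP_true (by intro y hy; have := htgt y hy; simp; omega)
      have htb : t.countP (fun y => decide (b < y)) = t.length :=
        countP_true (by intro y hy; have := htgt y hy; simp; omega)
      by_cases hr : rest = []
      · subst hr
        have hg' : gammaP P u = b :: t := by simpa [gammaP, gammaAux] using hg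
        rw [hg', hdec]
        rw [listInv]
        rw [List.countP_append, List.countP_cons]
        rw [listInv_append]
        simp only [listInv, List.countP_nil, cross_singleton, ht0, htlen, htb]
        have : ¬ (a < b) := by omega
        simp [this]
      · have hGperm : (gammaP P rest).Perm rest := gammaP_perm P rest
        have hlen : rest.length ≤ n := by
          have : u.length = t.length + rest.length + 1 := by simp [hdec]; omega
          omega
        have IH := ih rest hlen hr (by have := hrest hr; simpa [hP] using this)
        rw [hg, hdec]
        set G := gammaP P rest with hG
        have E1 : listInv ((b :: t) ++ G) = listInv (b :: t) + listInv G + cross (b :: t) G :=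
          listInv_append _ _
        have E2 : cross (b :: t) G = rest.countP (fun y => decide (y < b)) + cross t rest := by
          rw [cross_cons, cross_perm_right t hGperm, hGperm.countP_eq]
        have E3 : listInv (b :: t) = listInv t := by
          rw [listInv, ht0]; omega
        have E4 : listInv (t ++ b :: rest) = listInv t + listInv (b :: rest) + cross t (b :: rest) :=
          listInv_append _ _
        have E5 : listInv (b :: rest) = rest.countP (fun y => decide (y < b)) + listInv rest := by
          rw [listInv]
        have E6 : cross t (b :: rest) = t.length + cross t rest := by
          have hbr : (b :: rest) = [b] ++ rest := rfl
          rw [hbr, cross_append_right, cross_singleton, htb]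
        have E7 : (t ++ b :: rest).countP (fun y => decide (a < y))
            = t.length + rest.countP (fun y => decide (a < y)) := by
          rw [List.countP_append, List.countP_cons, htlen]
          have : ¬ (a < b) := by omega
          simp [this]
        rw [E1, E2, E3, E4, E5, E6, E7]
        omega

lemma invB (a : ℕ) : ∀ (n : ℕ) (u : List ℕ), u.length ≤ n → u ≠ [] → a < lastD u →
    listInv (gammaP (fun x => decide (a < x)) u)
      = listInv u + u.countP (fun y => decide (y ≤ a)) := by
  intro n
  induction n with
  | zero => intro u hu hne _; simp at hu; exact absurd hu hne
  | succ n ih =>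
      intro u hu hne hlast
      set P : ℕ → Bool := fun x => decide (a < x) with hP
      obtain ⟨t, b, rest, hdec, ht, hb, hg, hrest⟩ :=
        decomp P u hne (by simp [hP, hlast])
      have htle : ∀ y ∈ t, y ≤ a := by
        intro y hy; have := ht y hy; simp [hP] at this; omega
      have hba : a < b := by simpa [hP] using hb
      have ht1 : t.countP (fun y => decide (y < b)) = t.length :=
        countP_true (by intro y hy; have := htle y hy; simp; omega)
      have htlen : t.countP (fun y => decide (y ≤ a)) = t.length :=
        countP_true (by intro y hy; have := htle y hy; simp; omega)
      have htb : t.countP (fun y => decide (b < y)) = 0 :=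
        countP_false (by intro y hy; have := htle y hy; simp; omega)
      by_cases hr : rest = []
      · subst hr
        have hg' : gammaP P u = b :: t := by simpa [gammaP, gammaAux] using hg
        rw [hg', hdec]
        rw [listInv]
        rw [List.countP_append, List.countP_cons]
        rw [listInv_append]
        simp only [listInv, List.countP_nil, cross_singleton, ht1, htlen, htb]
        have : ¬ (b ≤ a) := by omega
        simp [this]; omega
      · have hGperm : (gammaP P rest).Perm rest := gammaP_perm P rest
        have hlen : rest.length ≤ n := by
          have : u.length = t.length + rest.length + 1 := by simp [hdec]; omega
          omega
        have IH := ih rest hlen hr (by have := hrest hr; simpa [hP] using this)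
        rw [hg, hdec]
        set G := gammaP P rest with hG
        have E1 : listInv ((b :: t) ++ G) = listInv (b :: t) + listInv G + cross (b :: t) G :=
          listInv_append _ _
        have E2 : cross (b :: t) G = rest.countP (fun y => decide (y < b)) + cross t rest := by
          rw [cross_cons, cross_perm_right t hGperm, hGperm.countP_eq]
        have E3 : listInv (b :: t) = t.length + listInv t := by
          rw [listInv, ht1]
        have E4 : listInv (t ++ b :: rest) = listInv t + listInv (b :: rest) + cross t (b :: rest) :=
          listInv_append _ _
        have E5 : listInv (b :: rest) = rest.countP (fun y => decide (y < b)) + listInv rest := by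
          rw [listInv]
        have E6 : cross t (b :: rest) = cross t rest := by
          have hbr : (b :: rest) = [b] ++ rest := rfl
          rw [hbr, cross_append_right, cross_singleton, htb]; omega
        have E7 : (t ++ b :: rest).countP (fun y => decide (y ≤ a))
            = t.length + rest.countP (fun y => decide (y ≤ a)) := by
          rw [List.countP_append, List.countP_cons, htlen]
          have : ¬ (b ≤ a) := by omega
          simp [this]
        rw [E1, E2, E3, E4, E5, E6, E7]
        omega

lemma gammaP_nil (P : ℕ → Bool) : gammaP P [] = [] := rfl

lemma gammaP_eq_nil_iff (P : ℕ → Bool) (u : List ℕ) : gammaP P u = [] ↔ u = [] := by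
  constructor
  · intro h
    have := (gammaP_perm P u).length_eq
    rw [h] at this
    exact List.length_eq_zero_iff.mp this.symm
  · rintro rfl; rfl

lemma gammaP_head (P : ℕ → Bool) (u : List ℕ) (hne : u ≠ []) (hlast : P (lastD u) = true) :
    ∃ h tl, gammaP P u = h :: tl ∧ P h = true := by
  obtain ⟨t, b, rest, _, _, hb, hg, _⟩ := decomp P u hne hlast
  exact ⟨b, t ++ gammaP P rest, hg, hb⟩

lemma block_unique (P : ℕ → Bool) :
    ∀ (t₁ t₂ g₁ g₂ : List ℕ), (∀ y ∈ t₁, P y = false) → (∀ y ∈ t₂, P y = false) →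
      (g₁ = [] ∨ ∃ h tl, g₁ = h :: tl ∧ P h = true) →
      (g₂ = [] ∨ ∃ h tl, g₂ = h :: tl ∧ P h = true) →
      t₁ ++ g₁ = t₂ ++ g₂ → t₁ = t₂ ∧ g₁ = g₂ := by
  intro t₁
  induction t₁ with
  | nil =>
      intro t₂ g₁ g₂ h₁ h₂ hg₁ hg₂ he
      cases t₂ with
      | nil => simpa using he
      | cons z t₂' =>
          exfalso
          simp only [List.nil_append, List.cons_append] at he
          rcases hg₁ with rfl | ⟨h, tl, rfl, hPh⟩
          · exact absurd he.symm (by simp)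
          · have hz : h = z := by injection he
            have hf := h₂ z (by simp)
            rw [hz, hf] at hPh
            simp at hPh
  | cons x t₁' ih =>
      intro t₂ g₁ g₂ h₁ h₂ hg₁ hg₂ he
      cases t₂ with
      | nil =>
          exfalso
          simp only [List.cons_append, List.nil_append] at he
          rcases hg₂ with rfl | ⟨h, tl, rfl, hPh⟩
          · exact absurd he (by simp)
          · have hx : h = x := by injection he with h1 h2; omega
            have hf := h₁ x (by simp)
            rw [hx, hf] at hPh
            simp at hPh
      | cons z t₂' =>
          simp only [List.cons_append, List.cons.injEq] at he
          obtain ⟨rfl, he'⟩ := he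
          obtain ⟨h1, h2⟩ := ih t₂' g₁ g₂ (fun y hy => h₁ y (by simp [hy]))
            (fun y hy => h₂ y (by simp [hy])) hg₁ hg₂ he'
          exact ⟨by rw [h1], h2⟩

lemma gammaP_inj (P : ℕ → Bool) :
    ∀ (n : ℕ) (u₁ u₂ : List ℕ), u₁.length ≤ n →
      (u₁ ≠ [] → P (lastD u₁) = true) → (u₂ ≠ [] → P (lastD u₂) = true) →
      gammaP P u₁ = gammaP P u₂ → u₁ = u₂ := by
  intro n
  induction n with
  | zero =>
      intro u₁ u₂ hu h1 h2 he
      have : u₁ = [] := by simpa using List.length_eq_zero_iff.mp (by omega)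
      subst this
      symm
      rw [← gammaP_eq_nil_iff P]
      exact he.symm
  | succ n ih =>
      intro u₁ u₂ hu h1 h2 he
      by_cases hn1 : u₁ = []
      · subst hn1
        symm
        rw [← gammaP_eq_nil_iff P]
        exact he.symm
      have hn2 : u₂ ≠ [] := by
        intro hc
        subst hc
        rw [gammaP_nil, gammaP_eq_nil_iff] at he
        exact hn1 he
      obtain ⟨t₁, b₁, r₁, hd₁, ht₁, hb₁, hg₁, hr₁⟩ := decomp P u₁ hn1 (h1 hn1)
      obtain ⟨t₂, b₂, r₂, hd₂, ht₂, hb₂, hg₂, hr₂⟩ := decomp P u₂ hn2 (h2 hn2)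
      rw [hg₁, hg₂] at he
      simp only [List.cons_append, List.cons.injEq] at he
      obtain ⟨rfl, he'⟩ := he
      have hside : ∀ (r : List ℕ), (r ≠ [] → P (lastD r) = true) →
          gammaP P r = [] ∨ ∃ h tl, gammaP P r = h :: tl ∧ P h = true := by
        intro r hr
        by_cases h : r = []
        · left; rw [h]; rfl
        · right; exact gammaP_head P r h (hr h)
      obtain ⟨hteq, hgeq⟩ := block_unique P t₁ t₂ (gammaP P r₁) (gammaP P r₂) ht₁ ht₂
        (hside r₁ hr₁) (hside r₂ hr₂) he'
      have hlen : r₁.length ≤ n := by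
        have : u₁.length = t₁.length + r₁.length + 1 := by simp [hd₁]; omega
        omega
      have hreq : r₁ = r₂ := ih r₁ r₂ hlen hr₁ hr₂ hgeq
      rw [hd₁, hd₂, hteq, hreq]

lemma countP_le_lt (a : ℕ) (l : List ℕ) :
    l.countP (fun y => decide (y ≤ a)) + l.countP (fun x => decide (a < x)) = l.length := by
  induction l with
  | nil => simp
  | cons x t ih =>
      simp only [List.countP_cons, List.length_cons]
      by_cases h : x ≤ a
      · have h2 : ¬ (a < x) := by omega
        simp [h, h2]; omega
      · have h2 : a < x := by omega
        simp [h, h2]; omega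

/-- The Foata cycling step for letter `a`. -/
def gammaF (a : ℕ) (u : List ℕ) : List ℕ :=
  if lastD u ≤ a then gammaP (fun x => decide (x ≤ a)) u
  else gammaP (fun x => decide (a < x)) u

lemma gammaF_perm (a : ℕ) (u : List ℕ) : (gammaF a u).Perm u := by
  rw [gammaF]; split <;> exact gammaP_perm _ u

lemma gammaF_inj (a : ℕ) {u₁ u₂ : List ℕ} (h : gammaF a u₁ = gammaF a u₂) : u₁ = u₂ := by
  by_cases hn1 : u₁ = []
  · subst hn1
    have : gammaF a u₂ = [] := by rw [← h]; rw [gammaF]; split <;> rfl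
    have := (gammaF_perm a u₂).length_eq
    rw [‹gammaF a u₂ = []›] at this
    exact (List.length_eq_zero_iff.mp this.symm).symm
  by_cases hn2 : u₂ = []
  · subst hn2
    have h2 : gammaF a u₁ = [] := by rw [h]; rw [gammaF]; split <;> rfl
    have := (gammaF_perm a u₁).length_eq
    rw [h2] at this
    exact List.length_eq_zero_iff.mp (by simpa using this.symm)
  -- both nonempty: determine the case from the head
  by_cases hc1 : lastD u₁ ≤ a <;> by_cases hc2 : lastD u₂ ≤ a
  · rw [gammaF, if_pos hc1, gammaF, if_pos hc2] at h
    exact gammaP_inj (fun x => decide (x ≤ a)) u₁.length u₁ u₂ (le_refl _)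
      (fun _ => by simpa using hc1) (fun _ => by simpa using hc2) h
  · exfalso
    rw [gammaF, if_pos hc1, gammaF, if_neg hc2] at h
    obtain ⟨h1, tl1, hg1, hp1⟩ := gammaP_head (fun x => decide (x ≤ a)) u₁ hn1 (by simpa using hc1)
    obtain ⟨h2', tl2, hg2, hp2⟩ := gammaP_head (fun x => decide (a < x)) u₂ hn2 (by simp; omega)
    rw [hg1, hg2] at h
    injection h with hh _
    simp at hp1 hp2
    omega
  · exfalso
    rw [gammaF, if_neg hc1, gammaF, if_pos hc2] at h
    obtain ⟨h1, tl1, hg1, hp1⟩ := gammaP_head (fun x => decide (a < x)) u₁ hn1 (by simp; omega)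
    obtain ⟨h2', tl2, hg2, hp2⟩ := gammaP_head (fun x => decide (x ≤ a)) u₂ hn2 (by simpa using hc2)
    rw [hg1, hg2] at h
    injection h with hh _
    simp at hp1 hp2
    omega
  · rw [gammaF, if_neg hc1, gammaF, if_neg hc2] at h
    exact gammaP_inj (fun x => decide (a < x)) u₁.length u₁ u₂ (le_refl _)
      (fun _ => by simp; omega) (fun _ => by simp; omega) h

/-- The Foata bijection, built from the reversed word. -/
def foataAux : List ℕ → List ℕ
  | [] => []
  | a :: r => gammaF a (foataAux r) ++ [a]

lemma foataAux_perm : ∀ r : List ℕ, (foataAux r).Perm r := by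
  intro r
  induction r with
  | nil => simp [foataAux]
  | cons a rest ih =>
      rw [foataAux]
      have h1 : (gammaF a (foataAux rest) ++ [a]).Perm (foataAux rest ++ [a]) :=
        (gammaF_perm a (foataAux rest)).append_right [a]
      refine h1.trans ?_
      have h2 : (foataAux rest ++ [a]).Perm (rest ++ [a]) := ih.append_right [a]
      refine h2.trans ?_
      exact List.perm_append_singleton a rest

lemma foataAux_ne_nil {r : List ℕ} (h : r ≠ []) : foataAux r ≠ [] := by
  intro hc
  have := (foataAux_perm r).length_eq
  rw [hc] at this
  exact h (List.length_eq_zero_iff.mp this.symm)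

lemma foataAux_lastD (a : ℕ) (r : List ℕ) : lastD (foataAux (a :: r)) = a := by
  rw [foataAux, lastD_snoc]

lemma foataAux_inj : ∀ (n : ℕ) (r₁ r₂ : List ℕ), r₁.length ≤ n →
    foataAux r₁ = foataAux r₂ → r₁ = r₂ := by
  intro n
  induction n with
  | zero =>
      intro r₁ r₂ hl he
      have h1 : r₁ = [] := List.length_eq_zero_iff.mp (by omega)
      subst h1
      cases r₂ with
      | nil => rfl
      | cons b r₂' => exact absurd he.symm (foataAux_ne_nil (by simp))
  | succ n ih =>
      intro r₁ r₂ hl he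
      cases r₁ with
      | nil =>
          cases r₂ with
          | nil => rfl
          | cons b r₂' => exact absurd he.symm (foataAux_ne_nil (by simp))
      | cons a r₁' =>
          cases r₂ with
          | nil => exact absurd he (foataAux_ne_nil (by simp))
          | cons b r₂' =>
              have hab : a = b := by
                have := congrArg lastD he
                rwa [foataAux_lastD, foataAux_lastD] at this
              subst hab
              rw [foataAux, foataAux] at he
              have he' : gammaF a (foataAux r₁') = gammaF a (foataAux r₂') :=
                List.append_inj_left' he (by simp)
              have : foataAux r₁' = foataAux r₂' := gammaF_inj a he'
              have hr : r₁' = r₂' := ih r₁' r₂' (by simp at hl; omega) this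
              rw [hr]

/-- Main invariant : `listInv ∘ foataAux` computes the major index of the reversal. -/
lemma foataAux_inv : ∀ r : List ℕ, listInv (foataAux r) = wordMaj r.reverse := by
  intro r
  induction r with
  | nil => simp [foataAux, listInv, wordMaj_nil]
  | cons a rest ih =>
      rw [foataAux]
      by_cases hr : rest = []
      · subst hr
        simp [gammaF, gammaP, gammaAux, foataAux, lastD, listInv, wordMaj_singleton]
      have hne : foataAux rest ≠ [] := foataAux_ne_nil hr
      have hrevne : rest.reverse ≠ [] := by simpa using hr
      set u := foataAux rest with hu
      have hperm : u.Perm rest := foataAux_perm rest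
      have hlast : lastD u = lastD rest.reverse := by
        -- lastD u = head of rest ; lastD (rest.reverse) = head of rest
        cases rest with
        | nil => exact absurd rfl hr
        | cons x v =>
            rw [hu, foataAux_lastD]
            rw [List.reverse_cons, lastD_snoc]
      have hmaj : wordMaj (a :: rest).reverse
          = wordMaj rest.reverse + if a < lastD rest.reverse then rest.length else 0 := by
        rw [List.reverse_cons, wordMaj_snoc _ _ hrevne]
        simp
      rw [hmaj, ← ih]
      rw [listInv_snoc]
      have hcount : (gammaF a u).countP (fun x => decide (a < x))
          = u.countP (fun x => decide (a < x)) := (gammaF_perm a u).countP_eq _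
      rw [hcount]
      by_cases hc : lastD u ≤ a
      · rw [gammaF, if_pos hc]
        have := invA a u.length u (le_refl _) hne hc
        rw [this]
        rw [← hlast]
        have : ¬ (a < lastD u) := by omega
        simp [this]
      · rw [gammaF, if_neg hc]
        have hB := invB a u.length u (le_refl _) hne (by omega)
        rw [hB]
        rw [← hlast]
        have h1 : a < lastD u := by omega
        simp only [h1, if_true]
        have hsplit := countP_le_lt a u
        have hlen2 : u.length = rest.length := hperm.length_eq
        omega

/-- The Foata bijection. -/
def phiF (w : List ℕ) : List ℕ := foataAux w.reverse

lemma phiF_perm (w : List ℕ) : (phiF w).Perm w := by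
  refine (foataAux_perm w.reverse).trans ?_
  exact List.reverse_perm w

lemma phiF_inj : Function.Injective phiF := by
  intro w₁ w₂ h
  have := foataAux_inj w₁.reverse.length w₁.reverse w₂.reverse (le_refl _) h
  simpa using congrArg List.reverse this

lemma phiF_spec (u : List ℕ) : wordInv (phiF u) = wordMaj u := by
  rw [wordInv_eq_listInv, phiF, foataAux_inv, List.reverse_reverse]

/-- `inv` and `maj` are equidistributed over the rearrangement class of any word
over the positive integers. -/
theorem inv_maj_equidistributed (w : List ℕ) (hpos : ∀ x ∈ w, 0 < x) :
    (↑(w.permutations.dedup.map wordInv) : Multiset ℕ)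
      = (↑(w.permutations.dedup.map wordMaj) : Multiset ℕ) := by
  set l := w.permutations.dedup with hl
  set s : Multiset (List ℕ) := (↑l : Multiset (List ℕ)) with hs
  have hnodup : s.Nodup := by
    rw [hs, Multiset.coe_nodup, hl]
    exact w.permutations.nodup_dedup
  have hmem : ∀ u, u ∈ s ↔ u.Perm w := by
    intro u
    rw [hs, Multiset.mem_coe, hl, List.mem_dedup, List.mem_permutations]
  have ht_nodup : (s.map phiF).Nodup := hnodup.map phiF_inj
  have hsub : s.map phiF ⊆ s := by
    intro v hv
    obtain ⟨u, hu, rfl⟩ := Multiset.mem_map.mp hv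
    rw [hmem]
    exact (phiF_perm u).trans ((hmem u).mp hu)
  have hle : s.map phiF ≤ s := (Multiset.le_iff_subset ht_nodup).mpr hsub
  have heq : s.map phiF = s :=
    Multiset.eq_of_le_of_card_le hle (by rw [Multiset.card_map])
  have key : s.map wordMaj = s.map wordInv := by
    calc s.map wordMaj = s.map (wordInv ∘ phiF) := by
          apply Multiset.map_congr rfl
          intro u _
          exact (phiF_spec u).symm
      _ = (s.map phiF).map wordInv := by rw [Multiset.map_map]
      _ = s.map wordInv := by rw [heq]
  have h1 : (↑(l.map wordInv) : Multiset ℕ) = s.map wordInv := by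
    rw [hs, Multiset.map_coe]
  have h2 : (↑(l.map wordMaj) : Multiset ℕ) = s.map wordMaj := by
    rw [hs, Multiset.map_coe]
  rw [h1, h2, key]
end

section
/- For any word w, the descent tops sum Dtop(w) = Σ_{w_i descent top} h(w_i) equals the total count of the patterns 1-(32) + (32)-1 + (31)-2 + 2-(31) + 1-(21) + (21)-1 + 2·(21); i.e., Σ_{i : w_i > w_{i+1}} h(w_i) = #{(i,j): j>i+1, w_i>w_j>w_{i+1}} + #{(i,j): j<i, w_i>w_j>w_{i+1}} + #{(i,j): j>i+1, w_i>w_{i+1}>w_j} + #{(i,j): j<i, w_i>w_{i+1}>w_j} + #{(i,j): j<i, w_i>w_{i+1}=w_j} + #{(i,j): j>i+1, w_i>w_{i+1}=w_j} + 2·#{i : w_i>w_{i+1}}. -/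
/-- The descent tops sum `Dtop(w) = Σ_{descent tops} h(w_i)` equals
`(1\underline{32}) + (\underline{32}1) + (\underline{31}2) + (2\underline{31})
 + (1\underline{21}) + (\underline{21}1) + 2·(\underline{21})` of `w`.
Here `i` ranges over 0-based descent positions (`w_i > w_{i+1}`, `i < n-1`). -/
theorem dtop_eq_patterns (w : List ℕ) :
    (∑ i ∈ Finset.range (w.length - 1),
      if w.getD (i + 1) 0 < w.getD i 0 then
        1 + ((Finset.range w.length).filter (fun j => w.getD j 0 < w.getD i 0)).card
      else 0)
    = ((Finset.range (w.length - 1) ×ˢ Finset.range w.length).filter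
        (fun p => p.1 + 1 < p.2 ∧ w.getD p.2 0 < w.getD p.1 0 ∧
          w.getD (p.1 + 1) 0 < w.getD p.2 0)).card
    + ((Finset.range (w.length - 1) ×ˢ Finset.range w.length).filter
        (fun p => p.2 < p.1 ∧ w.getD p.2 0 < w.getD p.1 0 ∧
          w.getD (p.1 + 1) 0 < w.getD p.2 0)).card
    + ((Finset.range (w.length - 1) ×ˢ Finset.range w.length).filter
        (fun p => p.1 + 1 < p.2 ∧ w.getD (p.1 + 1) 0 < w.getD p.1 0 ∧
          w.getD p.2 0 < w.getD (p.1 + 1) 0)).card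
    + ((Finset.range (w.length - 1) ×ˢ Finset.range w.length).filter
        (fun p => p.2 < p.1 ∧ w.getD (p.1 + 1) 0 < w.getD p.1 0 ∧
          w.getD p.2 0 < w.getD (p.1 + 1) 0)).card
    + ((Finset.range (w.length - 1) ×ˢ Finset.range w.length).filter
        (fun p => p.2 < p.1 ∧ w.getD (p.1 + 1) 0 < w.getD p.1 0 ∧
          w.getD p.2 0 = w.getD (p.1 + 1) 0)).card
    + ((Finset.range (w.length - 1) ×ˢ Finset.range w.length).filter
        (fun p => p.1 + 1 < p.2 ∧ w.getD (p.1 + 1) 0 < w.getD p.1 0 ∧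
          w.getD p.2 0 = w.getD (p.1 + 1) 0)).card
    + 2 * ((Finset.range (w.length - 1)).filter
        (fun i => w.getD (i + 1) 0 < w.getD i 0)).card := by
  simp only [Finset.card_filter, Finset.sum_product]
  rw [Finset.mul_sum, ← Finset.sum_add_distrib, ← Finset.sum_add_distrib,
    ← Finset.sum_add_distrib, ← Finset.sum_add_distrib, ← Finset.sum_add_distrib,
    ← Finset.sum_add_distrib]
  refine Finset.sum_congr rfl fun i hi => ?_
  rw [Finset.mem_range] at hi
  by_cases hd : w.getD (i + 1) 0 < w.getD i 0
  · rw [if_pos hd, if_pos hd]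
    have key : ∑ j ∈ Finset.range w.length,
        ((if w.getD j 0 < w.getD i 0 then 1 else 0) : ℕ)
      = ∑ j ∈ Finset.range w.length,
        (((((((if i + 1 < j ∧ w.getD j 0 < w.getD i 0 ∧ w.getD (i + 1) 0 < w.getD j 0 then 1 else 0)
        + if j < i ∧ w.getD j 0 < w.getD i 0 ∧ w.getD (i + 1) 0 < w.getD j 0 then 1 else 0)
        + if i + 1 < j ∧ w.getD (i + 1) 0 < w.getD i 0 ∧ w.getD j 0 < w.getD (i + 1) 0 then 1 else 0)
        + if j < i ∧ w.getD (i + 1) 0 < w.getD i 0 ∧ w.getD j 0 < w.getD (i + 1) 0 then 1 else 0)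
        + if j < i ∧ w.getD (i + 1) 0 < w.getD i 0 ∧ w.getD j 0 = w.getD (i + 1) 0 then 1 else 0)
        + if i + 1 < j ∧ w.getD (i + 1) 0 < w.getD i 0 ∧ w.getD j 0 = w.getD (i + 1) 0 then 1 else 0)
        + if j = i + 1 then 1 else 0) := by
      refine Finset.sum_congr rfl fun j hj => ?_
      rcases eq_or_ne j (i + 1) with rfl | hj1
      · split_ifs <;> omega
      rcases eq_or_ne j i with rfl | hj0
      · split_ifs <;> omega
      · split_ifs <;> omega
    rw [key]
    rw [Finset.sum_add_distrib, Finset.sum_add_distrib, Finset.sum_add_distrib,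
      Finset.sum_add_distrib, Finset.sum_add_distrib, Finset.sum_add_distrib]
    have hlast : ∑ j ∈ Finset.range w.length, ((if j = i + 1 then 1 else 0) : ℕ) = 1 := by
      rw [Finset.sum_ite_eq' (Finset.range w.length) (i + 1) (fun _ => (1 : ℕ))]
      rw [if_pos (Finset.mem_range.mpr (by omega))]
    rw [hlast]
    ring
  · rw [if_neg hd, if_neg hd]
    have z1 : ∑ x ∈ Finset.range w.length,
        ((if i + 1 < x ∧ w.getD x 0 < w.getD i 0 ∧ w.getD (i + 1) 0 < w.getD x 0 then 1 else 0) : ℕ) = 0 :=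
      Finset.sum_eq_zero fun j _ => by split_ifs <;> omega
    have z2 : ∑ x ∈ Finset.range w.length,
        ((if x < i ∧ w.getD x 0 < w.getD i 0 ∧ w.getD (i + 1) 0 < w.getD x 0 then 1 else 0) : ℕ) = 0 :=
      Finset.sum_eq_zero fun j _ => by split_ifs <;> omega
    have z3 : ∑ x ∈ Finset.range w.length,
        ((if i + 1 < x ∧ w.getD (i + 1) 0 < w.getD i 0 ∧ w.getD x 0 < w.getD (i + 1) 0 then 1 else 0) : ℕ) = 0 :=
      Finset.sum_eq_zero fun j _ => by split_ifs <;> omega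
    have z4 : ∑ x ∈ Finset.range w.length,
        ((if x < i ∧ w.getD (i + 1) 0 < w.getD i 0 ∧ w.getD x 0 < w.getD (i + 1) 0 then 1 else 0) : ℕ) = 0 :=
      Finset.sum_eq_zero fun j _ => by split_ifs <;> omega
    have z5 : ∑ x ∈ Finset.range w.length,
        ((if x < i ∧ w.getD (i + 1) 0 < w.getD i 0 ∧ w.getD x 0 = w.getD (i + 1) 0 then 1 else 0) : ℕ) = 0 :=
      Finset.sum_eq_zero fun j _ => by split_ifs <;> omega
    have z6 : ∑ x ∈ Finset.range w.length,
        ((if i + 1 < x ∧ w.getD (i + 1) 0 < w.getD i 0 ∧ w.getD x 0 = w.getD (i + 1) 0 then 1 else 0) : ℕ) = 0 :=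
      Finset.sum_eq_zero fun j _ => by split_ifs <;> omega
    rw [z1, z2, z3, z4, z5, z6]
    ring
end

section
/- The map δ sending a word w ∈ S_{(A,m)} (permutations of the multiset (A,m)) to its set of 4-tuple-letters {W_1,…,W_n}, where W_i = (value of w_i, duplicate index of w_i, position type of w_i, right embracing number of w_i), is injective: two distinct rearrangements of the same multiset have distinct 4-tuple-letter sets. -/
/-- `isBlock w s e`: positions `s..e` form a descent block of `w`
(a maximal strictly decreasing consecutive run). -/
def isBlock (w : List ℕ) (s e : ℕ) : Prop :=
  s ≤ e ∧ e < w.length ∧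
  (∀ j < e, s ≤ j → w.getD (j + 1) 0 < w.getD j 0) ∧
  (s = 0 ∨ w.getD (s - 1) 0 ≤ w.getD s 0) ∧
  (e + 1 = w.length ∨ w.getD e 0 ≤ w.getD (e + 1) 0)

instance (w : List ℕ) (s e : ℕ) : Decidable (isBlock w s e) := by
  unfold isBlock; infer_instance

/-- Right embracing number of the letter at position `i`: the number of proper
descent blocks strictly to the right of `i` whose opener is `< w_i` and
whose closer is `> w_i`. -/
def remb (w : List ℕ) (i : ℕ) : ℕ :=
  ((Finset.range w.length ×ˢ Finset.range w.length).filter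
    (fun p => isBlock w p.1 p.2 ∧ p.1 < p.2 ∧ i < p.1 ∧
      w.getD p.2 0 < w.getD i 0 ∧ w.getD i 0 < w.getD p.1 0)).card

/-- Duplicate index: `w_i` is the `dupIndex w i`-th occurrence of its value. -/
def dupIndex (w : List ℕ) (i : ℕ) : ℕ :=
  ((Finset.range (i + 1)).filter (fun j => w.getD j 0 = w.getD i 0)).card

/-- The 4-tuple-letter of the letter at position `i`: its value, duplicate index,
position type (encoded by its descent-bottom and descent-top statuses), and
right embracing number. -/
def tupleLetter (w : List ℕ) (i : ℕ) : ℕ × ℕ × Bool × Bool × ℕ :=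
  (w.getD i 0, dupIndex w i,
   decide (0 < i ∧ w.getD i 0 < w.getD (i - 1) 0),
   decide (i + 1 < w.length ∧ w.getD (i + 1) 0 < w.getD i 0),
   remb w i)

/-- The map `δ` from a word to its set of 4-tuple-letters. -/
def delta (w : List ℕ) : Finset (ℕ × ℕ × Bool × Bool × ℕ) :=
  (Finset.range w.length).image (tupleLetter w)

/-! ### Auxiliary machinery for the injectivity proof -/

namespace DeltaInj

/-- Monotonicity along a stretch of consecutive descents. -/
lemma getD_le_of_decr (w : List ℕ) {a c : ℕ}
    (h : ∀ u, a ≤ u → u + 1 ≤ c → w.getD (u+1) 0 < w.getD u 0) :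
    ∀ p q, a ≤ p → p ≤ q → q ≤ c → w.getD q 0 ≤ w.getD p 0 := by
  intro p q hap hpq hqc
  induction q, hpq using Nat.le_induction with
  | base => exact le_refl _
  | succ q hq ih =>
      exact le_trans (le_of_lt (h q (le_trans hap hq) hqc)) (ih (by omega))

lemma getD_lt_of_decr (w : List ℕ) {a c : ℕ}
    (h : ∀ u, a ≤ u → u + 1 ≤ c → w.getD (u+1) 0 < w.getD u 0) :
    ∀ p q, a ≤ p → p < q → q ≤ c → w.getD q 0 < w.getD p 0 := by
  intro p q hap hpq hqc
  have h1 : w.getD (p+1) 0 < w.getD p 0 := h p hap (by omega)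
  have h2 : w.getD q 0 ≤ w.getD (p+1) 0 :=
    getD_le_of_decr w h (p+1) q (by omega) (by omega) hqc
  omega

/-- number of occurrences of value `x` in `w`, as a `Finset` count. -/
def cnt (w : List ℕ) (x : ℕ) : ℕ :=
  ((Finset.range w.length).filter (fun j => w.getD j 0 = x)).card

lemma cnt_eq_count (w : List ℕ) (x : ℕ) : cnt w x = w.count x := by
  induction w using List.reverseRecOn with
  | nil => simp [cnt]
  | append_singleton l a ih =>
      have hlen : (l ++ [a]).length = l.length + 1 := by simp
      have hfilter :
          ((Finset.range (l.length + 1)).filter (fun j => (l ++ [a]).getD j 0 = x))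
            = (if a = x then insert l.length ((Finset.range l.length).filter (fun j => l.getD j 0 = x))
               else ((Finset.range l.length).filter (fun j => l.getD j 0 = x))) := by
        ext j
        rcases eq_or_ne j l.length with hj | hj
        · subst hj
          have : (l ++ [a]).getD l.length 0 = a := by
            rw [List.getD_eq_getElem _ _ (by simp)]
            simp
          rcases eq_or_ne a x with ha | ha <;>
            simp [this, ha, Finset.mem_filter, Finset.mem_range]
        · by_cases hjl : j < l.length
          · have hg : (l ++ [a]).getD j 0 = l.getD j 0 := List.getD_append l [a] 0 j hjl
            rcases eq_or_ne a x with ha | ha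
            · rw [if_pos ha]
              simp only [Finset.mem_filter, Finset.mem_range, hg, Finset.mem_insert]
              constructor
              · rintro ⟨_, hx⟩; exact Or.inr ⟨hjl, hx⟩
              · rintro (h | ⟨_, hx⟩); · omega
                · exact ⟨by omega, hx⟩
            · rw [if_neg ha]
              simp only [Finset.mem_filter, Finset.mem_range, hg]
              constructor
              · rintro ⟨_, hx⟩; exact ⟨hjl, hx⟩
              · rintro ⟨_, hx⟩; exact ⟨by omega, hx⟩
          · have h1 : ¬ j < l.length + 1 := by omega
            have h2 : ¬ j < l.length := hjl
            rcases eq_or_ne a x with ha | ha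
            · rw [if_pos ha]
              simp only [Finset.mem_filter, Finset.mem_range, Finset.mem_insert]
              constructor
              · rintro ⟨hc, _⟩; omega
              · rintro (h | ⟨hc, _⟩) <;> omega
            · rw [if_neg ha]
              simp only [Finset.mem_filter, Finset.mem_range]
              constructor
              · rintro ⟨hc, _⟩; omega
              · rintro ⟨hc, _⟩; omega
      have hnot : l.length ∉ (Finset.range l.length).filter (fun j => l.getD j 0 = x) := by
        simp
      rw [cnt, hlen, hfilter]
      rcases eq_or_ne a x with ha | ha
      · rw [if_pos ha, Finset.card_insert_of_notMem hnot]
        have h2 : (l ++ [a]).count x = l.count x + 1 := by subst ha; simp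
        rw [h2, ← ih, cnt]
      · rw [if_neg ha]
        have h2 : (l ++ [a]).count x = l.count x := by
          simp [List.count_append, List.count_singleton']
          omega
        rw [h2, ← ih, cnt]

lemma cnt_perm {w₁ w₂ : List ℕ} (h : w₁.Perm w₂) (x : ℕ) : cnt w₁ x = cnt w₂ x := by
  rw [cnt_eq_count, cnt_eq_count, h.count_eq]

/-- among equal values, duplicate index is strictly monotone in position -/
lemma dup_lt_dup {w : List ℕ} {i i' : ℕ} (hii : i < i')
    (hv : w.getD i 0 = w.getD i' 0) : dupIndex w i < dupIndex w i' := by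
  have hsub : (Finset.range (i+1)).filter (fun j => w.getD j 0 = w.getD i 0) ⊆
      (Finset.range (i'+1)).filter (fun j => w.getD j 0 = w.getD i' 0) := by
    intro j hj
    simp only [Finset.mem_filter, Finset.mem_range] at hj ⊢
    exact ⟨by omega, by rw [← hv]; exact hj.2⟩
  have hmem : i' ∈ (Finset.range (i'+1)).filter (fun j => w.getD j 0 = w.getD i' 0) := by
    simp
  have hnmem : i' ∉ (Finset.range (i+1)).filter (fun j => w.getD j 0 = w.getD i 0) := by
    simp only [Finset.mem_filter, Finset.mem_range]
    omega
  exact Finset.card_lt_card (Finset.ssubset_iff_of_subset hsub |>.mpr ⟨i', hmem, hnmem⟩)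

/-- positions are determined by (value, duplicate index) -/
lemma pos_eq_of_key {w : List ℕ} {i i' : ℕ} (hv : w.getD i 0 = w.getD i' 0)
    (hd : dupIndex w i = dupIndex w i') : i = i' := by
  rcases lt_trichotomy i i' with h | h | h
  · exact absurd hd (Nat.ne_of_lt (dup_lt_dup h hv))
  · exact h
  · exact absurd hd.symm (Nat.ne_of_lt (dup_lt_dup h hv.symm))

/-- if there is no later occurrence of the value of position `i`,
then its duplicate index is the total count. -/
lemma dup_eq_cnt {w : List ℕ} {i : ℕ} (hi : i < w.length)
    (h : ∀ t, i < t → t < w.length → w.getD t 0 ≠ w.getD i 0) :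
    dupIndex w i = cnt w (w.getD i 0) := by
  unfold dupIndex cnt
  congr 1
  ext j
  simp only [Finset.mem_filter, Finset.mem_range]
  constructor
  · rintro ⟨hj, hx⟩; exact ⟨by omega, hx⟩
  · rintro ⟨hj, hx⟩
    refine ⟨?_, hx⟩
    by_contra hc
    exact h j (by omega) hj hx

/-- conversely, if the duplicate index is the total count then there is no
later occurrence. -/
lemma no_later_of_dup_eq_cnt {w : List ℕ} {i : ℕ} (hi : i < w.length)
    (hd : dupIndex w i = cnt w (w.getD i 0)) :
    ∀ t, i < t → t < w.length → w.getD t 0 ≠ w.getD i 0 := by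
  intro t hit htn hv
  have hsub : (Finset.range (i+1)).filter (fun j => w.getD j 0 = w.getD i 0) ⊆
      (Finset.range w.length).filter (fun j => w.getD j 0 = w.getD i 0) := by
    intro j hj
    simp only [Finset.mem_filter, Finset.mem_range] at hj ⊢
    exact ⟨by omega, hj.2⟩
  have heq : (Finset.range (i+1)).filter (fun j => w.getD j 0 = w.getD i 0) =
      (Finset.range w.length).filter (fun j => w.getD j 0 = w.getD i 0) :=
    Finset.eq_of_subset_of_card_le hsub (le_of_eq hd.symm)
  have : t ∈ (Finset.range (i+1)).filter (fun j => w.getD j 0 = w.getD i 0) := by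
    rw [heq]
    simp only [Finset.mem_filter, Finset.mem_range]
    exact ⟨htn, hv⟩
  simp only [Finset.mem_filter, Finset.mem_range] at this
  omega

lemma mem_delta {w : List ℕ} {t : ℕ × ℕ × Bool × Bool × ℕ} :
    t ∈ delta w ↔ ∃ i, i < w.length ∧ tupleLetter w i = t := by
  simp [delta, Finset.mem_image, Finset.mem_range]

/-- unpack equality of tuple letters -/
lemma tuple_eq_iff {w₁ w₂ : List ℕ} {i j : ℕ} :
    tupleLetter w₁ i = tupleLetter w₂ j ↔
      (w₁.getD i 0 = w₂.getD j 0 ∧ dupIndex w₁ i = dupIndex w₂ j ∧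
       ((0 < i ∧ w₁.getD i 0 < w₁.getD (i - 1) 0) ↔ (0 < j ∧ w₂.getD j 0 < w₂.getD (j - 1) 0)) ∧
       ((i + 1 < w₁.length ∧ w₁.getD (i + 1) 0 < w₁.getD i 0) ↔
         (j + 1 < w₂.length ∧ w₂.getD (j + 1) 0 < w₂.getD j 0)) ∧
       remb w₁ i = remb w₂ j) := by
  simp only [tupleLetter, Prod.mk.injEq, decide_eq_decide]

/-- blocks can only start at a non-descent position: if everything from `i` on
is descending, `remb w i = 0`. -/
lemma remb_eq_zero {w : List ℕ} {i : ℕ}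
    (h : ∀ t, i ≤ t → t + 1 < w.length → w.getD (t+1) 0 < w.getD t 0) :
    remb w i = 0 := by
  unfold remb
  rw [Finset.card_eq_zero, Finset.filter_eq_empty_iff]
  rintro ⟨s, e⟩ hp
  simp only [Finset.mem_product, Finset.mem_range] at hp
  dsimp only
  rintro ⟨hb, hse, his, -⟩
  obtain ⟨-, hen, -, hleft, -⟩ := hb
  rcases hleft with h0 | hle
  · omega
  · have hd : w.getD s 0 < w.getD (s-1) 0 := by
      have := h (s-1) (by omega) (by omega)
      have hs1 : s - 1 + 1 = s := by omega
      rwa [hs1] at this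
    omega

/-- The workhorse: if after position `j` there is a weak ascent at `r` followed by
a value above `w_j` at `r+1`, and later a value below `w_j`, and the value of `j`
never recurs after `j`, then some proper block strictly right of `j` embraces `w_j`. -/
lemma remb_pos {w : List ℕ} {j r q : ℕ}
    (hjr : j ≤ r) (hrq : r + 1 < q) (hqn : q < w.length)
    (hr : w.getD r 0 ≤ w.getD (r+1) 0)
    (hr1 : w.getD j 0 < w.getD (r+1) 0)
    (hq : w.getD q 0 < w.getD j 0)
    (hnr : ∀ t, j < t → t < w.length → w.getD t 0 ≠ w.getD j 0) :
    remb w j ≠ 0 := by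
  classical
  set x := w.getD j 0 with hx
  -- Q : least position beyond r+1 with value < x
  have hex : ∃ s, r + 1 < s ∧ w.getD s 0 < x := ⟨q, hrq, hq⟩
  set Q := Nat.find hex with hQdef
  obtain ⟨hQr, hQx⟩ : r + 1 < Q ∧ w.getD Q 0 < x := Nat.find_spec hex
  have hQq : Q ≤ q := Nat.find_min' hex ⟨hrq, hq⟩
  have hQn : Q < w.length := by omega
  have C1 : ∀ s, r + 1 ≤ s → s < Q → x < w.getD s 0 := by
    intro s h1 h2
    rcases eq_or_lt_of_le h1 with h3 | h3
    · rw [← h3]; exact hr1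
    · have hmin := Nat.find_min hex h2
      push_neg at hmin
      have h4 : x ≤ w.getD s 0 := hmin h3
      have h5 : w.getD s 0 ≠ x := hnr s (by omega) (by omega)
      omega
  -- S : start of the maximal descending run ending at Q-1
  have hexD : ∃ s, ∀ u, s ≤ u → u + 1 ≤ Q - 1 → w.getD (u+1) 0 < w.getD u 0 :=
    ⟨Q - 1, fun u h1 h2 => absurd (by omega : u < u) (lt_irrefl u)⟩
  set S := Nat.find hexD with hSdef
  have hS : ∀ u, S ≤ u → u + 1 ≤ Q - 1 → w.getD (u+1) 0 < w.getD u 0 := Nat.find_spec hexD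
  have hSQ : S ≤ Q - 1 := Nat.find_min' hexD (fun u h1 h2 => absurd (by omega : u < u) (lt_irrefl u))
  have hSr : r < S := by
    by_contra hc
    push_neg at hc
    exact absurd (hS r hc (by omega)) (by omega)
  have hleft : S = 0 ∨ w.getD (S-1) 0 ≤ w.getD S 0 := by
    rcases Nat.eq_zero_or_pos S with h0 | h0
    · exact Or.inl h0
    · right
      have hnd := Nat.find_min hexD (show S - 1 < S by omega)
      push_neg at hnd
      obtain ⟨u, hu1, hu2, hu3⟩ := hnd
      rcases eq_or_lt_of_le hu1 with h4 | h4
      · rw [← h4] at hu3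
        have h5 : S - 1 + 1 = S := by omega
        rw [h5] at hu3
        omega
      · exact absurd (hS u (by omega) hu2) (by omega)
  -- E : end of the maximal descending run through Q
  have hexE : ∃ e, Q ≤ e ∧ (e + 1 = w.length ∨ w.getD e 0 ≤ w.getD (e+1) 0) :=
    ⟨w.length - 1, by omega, Or.inl (by omega)⟩
  set E := Nat.find hexE with hEdef
  obtain ⟨hQE, hEmax⟩ : Q ≤ E ∧ (E + 1 = w.length ∨ w.getD E 0 ≤ w.getD (E+1) 0) :=
    Nat.find_spec hexE
  have hEn : E < w.length := by
    have := Nat.find_min' hexE (show Q ≤ w.length - 1 ∧ _ from ⟨by omega, Or.inl (by omega)⟩)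
    omega
  have hdesc : ∀ u, Q ≤ u → u < E → w.getD (u+1) 0 < w.getD u 0 := by
    intro u h1 h2
    have := Nat.find_min hexE h2
    push_neg at this
    exact (this h1).2
  -- the block (S, E)
  have hinter : ∀ jj, jj < E → S ≤ jj → w.getD (jj+1) 0 < w.getD jj 0 := by
    intro jj h1 h2
    rcases lt_trichotomy (jj+1) Q with h3 | h3 | h3
    · exact hS jj h2 (by omega)
    · have h4 : jj = Q - 1 := by omega
      have h5 : x < w.getD jj 0 := C1 jj (by omega) (by omega)
      rw [h3]
      omega
    · exact hdesc jj (by omega) h1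
  have hblock : isBlock w S E :=
    ⟨by omega, hEn, hinter, hleft, hEmax⟩
  have hWE : w.getD E 0 < x := by
    have h1 : w.getD E 0 ≤ w.getD Q 0 :=
      getD_le_of_decr w (fun u h1 h2 => hdesc u h1 (by omega)) Q E (le_refl Q) hQE (le_refl E)
    omega
  have hWS : x < w.getD S 0 := by
    have h1 : w.getD (Q-1) 0 ≤ w.getD S 0 :=
      getD_le_of_decr w hS S (Q-1) (le_refl S) hSQ (le_refl (Q-1))
    have h2 : x < w.getD (Q-1) 0 := C1 (Q-1) (by omega) (by omega)
    omega
  have hmem : (S, E) ∈ ((Finset.range w.length ×ˢ Finset.range w.length).filter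
      (fun p => isBlock w p.1 p.2 ∧ p.1 < p.2 ∧ j < p.1 ∧
        w.getD p.2 0 < w.getD j 0 ∧ w.getD j 0 < w.getD p.1 0)) := by
    refine Finset.mem_filter.mpr ⟨?_, ?_⟩
    · simp only [Finset.mem_product, Finset.mem_range]
      exact ⟨by omega, hEn⟩
    · exact ⟨hblock, by omega, by omega, hWE, hWS⟩
  unfold remb
  exact Finset.card_ne_zero_of_mem hmem

/-- If positions `i` of `w₁` and `j` of `w₂` carry the same value and both are the
last occurrences of that value, then their tuple letters coincide. -/
lemma tuple_eq_of_last {w₁ w₂ : List ℕ} (hperm : w₁.Perm w₂) (h : delta w₁ = delta w₂)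
    {i j : ℕ} (hi : i < w₁.length) (hj : j < w₂.length)
    (hv : w₁.getD i 0 = w₂.getD j 0)
    (hlast1 : ∀ t, i < t → t < w₁.length → w₁.getD t 0 ≠ w₁.getD i 0)
    (hlast2 : ∀ t, j < t → t < w₂.length → w₂.getD t 0 ≠ w₂.getD j 0) :
    tupleLetter w₁ i = tupleLetter w₂ j := by
  have hmem : tupleLetter w₁ i ∈ delta w₂ := by
    rw [← h]
    exact mem_delta.mpr ⟨i, hi, rfl⟩
  obtain ⟨j', hj', hteq⟩ := mem_delta.mp hmem
  obtain ⟨hv', hd', -, -, -⟩ := tuple_eq_iff.mp hteq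
  have hd2 : dupIndex w₂ j' = dupIndex w₂ j := by
    rw [hd', dup_eq_cnt hi hlast1, dup_eq_cnt hj hlast2, hv, cnt_perm hperm]
  have hj'j : j' = j := pos_eq_of_key (by rw [hv', hv]) hd2
  rw [← hteq, hj'j]

/-- One-sided comparison of last letters. -/
lemma last_le {w₁ w₂ : List ℕ} (hperm : w₁.Perm w₂) (h : delta w₁ = delta w₂)
    (hne : w₁ ≠ []) :
    w₂.getD (w₂.length - 1) 0 ≤ w₁.getD (w₁.length - 1) 0 := by
  have hlen : w₂.length = w₁.length := hperm.length_eq.symm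
  set n := w₁.length with hn
  have hn1 : 1 ≤ n := by
    rcases w₁ with _ | ⟨a, l⟩
    · exact absurd rfl hne
    · simp [hn]
  set x := w₂.getD (n - 1) 0 with hxdef
  have hmem : tupleLetter w₂ (n-1) ∈ delta w₁ := by
    rw [h]
    exact mem_delta.mpr ⟨n-1, by omega, rfl⟩
  rw [hlen]
  obtain ⟨i, hi, hteq⟩ := mem_delta.mp hmem
  obtain ⟨hv, hd, -, htop, hremb⟩ := tuple_eq_iff.mp hteq
  have hlast2 : ∀ t, n - 1 < t → t < w₂.length → w₂.getD t 0 ≠ w₂.getD (n-1) 0 := by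
    intro t h1 h2
    rw [hlen] at h2
    omega
  have hrz : remb w₂ (n-1) = 0 := by
    apply remb_eq_zero
    intro t h1 h2
    rw [hlen] at h2
    omega
  have hdup2 : dupIndex w₂ (n-1) = cnt w₂ x := dup_eq_cnt (by omega) hlast2
  have hdup1 : dupIndex w₁ i = cnt w₁ (w₁.getD i 0) := by
    rw [hd, hdup2, hv, ← hxdef]
    exact (cnt_perm hperm x).symm
  have hlast1 : ∀ t, i < t → t < w₁.length → w₁.getD t 0 ≠ w₁.getD i 0 :=
    no_later_of_dup_eq_cnt hi hdup1
  by_contra hc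
  push_neg at hc
  have hxi : w₁.getD i 0 = x := hv
  have hine : i ≠ n - 1 := by
    intro he
    rw [he] at hxi
    omega
  have hilt : i < n - 1 := by omega
  have htopf : ¬ (i + 1 < w₁.length ∧ w₁.getD (i+1) 0 < w₁.getD i 0) := by
    rw [htop]
    rintro ⟨h1, -⟩
    rw [hlen] at h1
    omega
  push_neg at htopf
  have h1 : w₁.getD i 0 ≤ w₁.getD (i+1) 0 := htopf (by omega)
  have h2 : w₁.getD (i+1) 0 ≠ w₁.getD i 0 := hlast1 (i+1) (by omega) (by omega)
  have h3 : w₁.getD i 0 < w₁.getD (i+1) 0 := by omega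
  have h4 : i + 1 ≠ n - 1 := by
    intro he
    rw [he] at h3
    rw [hxi] at h3
    omega
  have hcontra : remb w₁ i ≠ 0 := by
    apply remb_pos (r := i) (q := n-1) (le_refl i) (by omega) (by omega) (le_of_lt h3) h3 _ hlast1
    rw [hxi]
    exact hc
  rw [hremb] at hcontra
  exact hcontra hrz

/-- the last letters of two words with equal `delta` agree. -/
lemma last_eq {w₁ w₂ : List ℕ} (hperm : w₁.Perm w₂) (h : delta w₁ = delta w₂)
    (hne : w₁ ≠ []) :
    w₁.getD (w₁.length - 1) 0 = w₂.getD (w₂.length - 1) 0 := by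
  have hne2 : w₂ ≠ [] := fun he => hne (List.Perm.eq_nil (he ▸ hperm))
  exact le_antisymm (last_le hperm.symm h.symm hne2) (last_le hperm h hne)

/-- tuple letters agree at a position `p` from which on both words agree and descend. -/
lemma suffix_tuple_eq {w₁ w₂ : List ℕ} (hperm : w₁.Perm w₂) (h : delta w₁ = delta w₂)
    {p : ℕ} (hp : p < w₁.length)
    (hS : ∀ s, p ≤ s → s < w₁.length → w₁.getD s 0 = w₂.getD s 0)
    (hD : ∀ s, p ≤ s → s + 1 < w₁.length → w₁.getD (s+1) 0 < w₁.getD s 0) :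
    tupleLetter w₁ p = tupleLetter w₂ p := by
  have hlen : w₂.length = w₁.length := hperm.length_eq.symm
  have hlast1 : ∀ t, p < t → t < w₁.length → w₁.getD t 0 ≠ w₁.getD p 0 := by
    intro t h1 h2 he
    have := getD_lt_of_decr w₁ (a := p) (c := w₁.length - 1)
      (fun u hu1 hu2 => hD u hu1 (by omega)) p t (le_refl p) h1 (by omega)
    omega
  have hlast2 : ∀ t, p < t → t < w₂.length → w₂.getD t 0 ≠ w₂.getD p 0 := by
    intro t h1 h2 he
    rw [hlen] at h2
    rw [← hS t (by omega) h2, ← hS p (le_refl p) hp] at he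
    exact hlast1 t h1 h2 he
  exact tuple_eq_of_last hperm h hp (by omega) (hS p (le_refl p) hp) hlast1 hlast2

/-- One-sided comparison of the letters preceding a common strictly decreasing
suffix, assuming both words descend into the suffix. -/
lemma ext_le {w₁ w₂ : List ℕ} (hperm : w₁.Perm w₂) (h : delta w₁ = delta w₂)
    {t : ℕ} (ht1 : 1 ≤ t) (htn : t + 1 ≤ w₁.length)
    (hS : ∀ s, w₁.length - t ≤ s → s < w₁.length → w₁.getD s 0 = w₂.getD s 0)
    (hD1 : ∀ s, w₁.length - t ≤ s → s + 1 < w₁.length → w₁.getD (s+1) 0 < w₁.getD s 0)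
    (hz1 : w₁.getD (w₁.length - t) 0 < w₁.getD (w₁.length - t - 1) 0)
    (hz2 : w₂.getD (w₂.length - t) 0 < w₂.getD (w₂.length - t - 1) 0) :
    w₂.getD (w₂.length - t - 1) 0 ≤ w₁.getD (w₁.length - t - 1) 0 := by
  classical
  have hlen : w₂.length = w₁.length := hperm.length_eq.symm
  set n := w₁.length with hn
  rw [hlen]
  set P := n - t - 1 with hPdef
  set x := w₁.getD P 0 with hxdef
  by_contra hc
  push_neg at hc
  -- facts about position P in w₁
  have hPn : P < n := by omega
  have hD1' : ∀ s, P ≤ s → s + 1 < n → w₁.getD (s+1) 0 < w₁.getD s 0 := by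
    intro s h1 h2
    rcases eq_or_lt_of_le h1 with h3 | h3
    · have e : s + 1 = n - t := by omega
      rw [e, ← h3, ← hxdef]
      exact hz1
    · exact hD1 s (by omega) h2
  have hlast1 : ∀ u, P < u → u < n → w₁.getD u 0 ≠ x := by
    intro u h1 h2 he
    have := getD_lt_of_decr w₁ (a := P) (c := n - 1)
      (fun v hv1 hv2 => hD1' v hv1 (by omega)) P u (le_refl P) h1 (by omega)
    omega
  have hdup1 : dupIndex w₁ P = cnt w₁ x := dup_eq_cnt hPn hlast1
  have hrz1 : remb w₁ P = 0 := remb_eq_zero (fun u h1 h2 => hD1' u h1 h2)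
  have htop1 : P + 1 < w₁.length ∧ w₁.getD (P+1) 0 < w₁.getD P 0 := by
    refine ⟨by omega, ?_⟩
    have : P + 1 = n - t := by omega
    rw [this]
    exact hz1
  -- extract the tuple of P into w₂
  have hmem : tupleLetter w₁ P ∈ delta w₂ := by
    rw [← h]
    exact mem_delta.mpr ⟨P, hPn, rfl⟩
  obtain ⟨jj, hjj, hteq⟩ := mem_delta.mp hmem
  obtain ⟨hv, hd, -, htop, hremb⟩ := tuple_eq_iff.mp hteq
  rw [hlen] at hjj
  have hrz2 : remb w₂ jj = 0 := by rw [hremb]; exact hrz1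
  have htop2 : jj + 1 < w₂.length ∧ w₂.getD (jj+1) 0 < w₂.getD jj 0 := htop.mpr htop1
  have hvx : w₂.getD jj 0 = x := hv
  have hdup2 : dupIndex w₂ jj = cnt w₂ (w₂.getD jj 0) := by
    rw [hd, hdup1, hvx, cnt_perm hperm x]
  have hlast2 : ∀ u, jj < u → u < n → w₂.getD u 0 ≠ x := by
    intro u h1 h2 he
    refine no_later_of_dup_eq_cnt (by omega : jj < w₂.length) hdup2 u h1 (by omega) ?_
    rw [hvx, he]
  -- the suffix of w₂ has no occurrence of x, and carries z₂ > x at position P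
  have hz2' : x < w₂.getD P 0 := hc
  have hjP : jj < P := by
    rcases lt_trichotomy jj P with hh | hh | hh
    · exact hh
    · rw [hh] at hvx; omega
    · exfalso
      have e := hS jj (by omega) (by omega)
      exact hlast1 jj hh (by omega) (e.trans hvx)
  -- T : first position after jj+1 with value above x
  have hjj1P : jj + 1 < P := by
    rcases eq_or_lt_of_le (show jj + 1 ≤ P by omega) with h3 | h3
    · exfalso
      rw [h3, hvx] at htop2
      omega
    · exact h3
  have hexT : ∃ s, jj + 1 < s ∧ x < w₂.getD s 0 := ⟨P, hjj1P, hz2'⟩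
  set T := Nat.find hexT with hTdef
  obtain ⟨hT1, hT2⟩ : jj + 1 < T ∧ x < w₂.getD T 0 := Nat.find_spec hexT
  have hTP : T ≤ P := Nat.find_min' hexT ⟨hjj1P, hz2'⟩
  have hr2 : w₂.getD (T-1) 0 ≤ x := by
    rcases eq_or_lt_of_le (show jj + 1 ≤ T - 1 by omega) with h3 | h3
    · rw [← h3]
      rw [hvx] at htop2
      omega
    · have hm := Nat.find_min hexT (show T - 1 < T by omega)
      push_neg at hm
      exact hm h3
  have hT1e : T - 1 + 1 = T := by omega
  have hcontra : remb w₂ jj ≠ 0 := by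
    apply remb_pos (r := T - 1) (q := n - t) (by omega : jj ≤ T - 1) (by omega) (by omega)
    · rw [hT1e]
      omega
    · rw [hT1e, hvx]
      exact hT2
    · have e := hS (n - t) (le_refl _) (by omega)
      rw [hvx, ← e]
      exact hz1
    · intro u h1 h2
      rw [hvx]
      exact hlast2 u h1 (by omega)
  exact hcontra hrz2

lemma take_getD (w : List ℕ) {i k : ℕ} (h : i < k) :
    (w.take k).getD i 0 = w.getD i 0 := by
  rcases Nat.lt_or_ge i w.length with h2 | h2
  · rw [List.getD_eq_getElem _ _ (by simp; omega), List.getD_eq_getElem _ _ h2]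
    simp
  · rw [List.getD_eq_default _ _ (by simp; omega), List.getD_eq_default _ _ h2]

section Strip

variable {w : List ℕ} {k : ℕ} (hk : k < w.length)
  (hdec : ∀ s, k ≤ s → s + 1 < w.length → w.getD (s+1) 0 < w.getD s 0)
  (hL : k = 0 ∨ w.getD (k-1) 0 ≤ w.getD k 0)

include hk hL in
lemma block_down {s e : ℕ} (he : e < k) :
    isBlock (w.take k) s e ↔ isBlock w s e := by
  have hul : (w.take k).length = k := by rw [List.length_take]; omega
  unfold isBlock
  rw [hul]
  constructor
  · rintro ⟨h1, h2, h3, h4, h5⟩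
    refine ⟨h1, by omega, ?_, ?_, ?_⟩
    · intro j hj hsj
      have := h3 j hj hsj
      rwa [take_getD w (by omega), take_getD w (by omega)] at this
    · rcases h4 with h4 | h4
      · exact Or.inl h4
      · right
        rwa [take_getD w (by omega), take_getD w (by omega)] at h4
    · right
      rcases h5 with h5 | h5
      · have he1 : e = k - 1 := by omega
        rcases hL with hL0 | hLle
        · omega
        · have e1 : e + 1 = k := by omega
          rw [he1, e1] at *
          exact hLle
      · rcases Nat.lt_or_ge (e+1) k with hek | hek
        · rwa [take_getD w hek, take_getD w (by omega)] at h5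
        · have : (w.take k).getD (e+1) 0 = 0 := by
            apply List.getD_eq_default
            omega
          rw [this] at h5
          have : (w.take k).getD e 0 = 0 := by omega
          rw [take_getD w (by omega)] at this
          rw [this]
          exact Nat.zero_le _
  · rintro ⟨h1, h2, h3, h4, h5⟩
    refine ⟨h1, by omega, ?_, ?_, ?_⟩
    · intro j hj hsj
      have := h3 j hj hsj
      rw [take_getD w (show j + 1 < k by omega), take_getD w (show j < k by omega)]
      exact this
    · rcases h4 with h4 | h4
      · exact Or.inl h4
      · right
        rwa [take_getD w (by omega), take_getD w (by omega)]
    · rcases Nat.lt_or_ge (e+1) k with hek | hek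
      · rcases h5 with h5 | h5
        · omega
        · right
          rwa [take_getD w hek, take_getD w (by omega)]
      · exact Or.inl (by omega)

include hk hdec hL in
lemma block_up {s e : ℕ} (hb : isBlock w s e) (hek : k ≤ e) :
    s = k ∧ e = w.length - 1 := by
  obtain ⟨h1, h2, h3, h4, h5⟩ := hb
  have hsk : k ≤ s := by
    by_contra hc
    push_neg at hc
    have hkpos : 1 ≤ k := by omega
    have := h3 (k-1) (by omega) (by omega)
    have e1 : k - 1 + 1 = k := by omega
    rw [e1] at this
    rcases hL with h0 | hle
    · omega
    · omega
  have hs : s = k := by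
    by_contra hc
    have hs1 : k < s := by omega
    rcases h4 with h0 | hle
    · omega
    · have := hdec (s-1) (by omega) (by omega)
      have e1 : s - 1 + 1 = s := by omega
      rw [e1] at this
      omega
  have he : e = w.length - 1 := by
    rcases h5 with h0 | hle
    · omega
    · by_contra hc
      have := hdec e (by omega) (by omega)
      omega
  exact ⟨hs, he⟩

include hk hdec hL in
lemma block_last : isBlock w k (w.length - 1) := by
  refine ⟨by omega, by omega, ?_, hL, Or.inl (by omega)⟩
  intro j hj hkj
  exact hdec j hkj (by omega)

include hk hdec hL in
lemma remb_strip {i : ℕ} (hik : i < k) :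
    remb w i = remb (w.take k) i +
      (if w.getD (w.length - 1) 0 < w.getD i 0 ∧ w.getD i 0 < w.getD k 0 ∧ k < w.length - 1
       then 1 else 0) := by
  classical
  have hul : (w.take k).length = k := by rw [List.length_take]; omega
  have hgets : ∀ j, j < k → (w.take k).getD j 0 = w.getD j 0 := fun j hj => take_getD w hj
  have hSu : remb (w.take k) i = ((Finset.range k ×ˢ Finset.range k).filter
      (fun p => isBlock (w.take k) p.1 p.2 ∧ p.1 < p.2 ∧ i < p.1 ∧
        (w.take k).getD p.2 0 < (w.take k).getD i 0 ∧
        (w.take k).getD i 0 < (w.take k).getD p.1 0)).card := by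
    unfold remb
    rw [hul]
  have key : ((Finset.range w.length ×ˢ Finset.range w.length).filter
      (fun p => isBlock w p.1 p.2 ∧ p.1 < p.2 ∧ i < p.1 ∧
        w.getD p.2 0 < w.getD i 0 ∧ w.getD i 0 < w.getD p.1 0)) =
      (if w.getD (w.length - 1) 0 < w.getD i 0 ∧ w.getD i 0 < w.getD k 0 ∧ k < w.length - 1
       then insert (k, w.length - 1) ((Finset.range k ×ˢ Finset.range k).filter
        (fun p => isBlock (w.take k) p.1 p.2 ∧ p.1 < p.2 ∧ i < p.1 ∧
          (w.take k).getD p.2 0 < (w.take k).getD i 0 ∧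
          (w.take k).getD i 0 < (w.take k).getD p.1 0))
       else ((Finset.range k ×ˢ Finset.range k).filter
        (fun p => isBlock (w.take k) p.1 p.2 ∧ p.1 < p.2 ∧ i < p.1 ∧
          (w.take k).getD p.2 0 < (w.take k).getD i 0 ∧
          (w.take k).getD i 0 < (w.take k).getD p.1 0))) := by
    ext ⟨s, e⟩
    simp only [Finset.mem_filter, Finset.mem_product, Finset.mem_range]
    constructor
    · rintro ⟨⟨hs, he⟩, hb, hse, his, hv1, hv2⟩
      rcases Nat.lt_or_ge e k with hek | hek
      · have hmem' : (s, e) ∈ ((Finset.range k ×ˢ Finset.range k).filter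
            (fun p => isBlock (w.take k) p.1 p.2 ∧ p.1 < p.2 ∧ i < p.1 ∧
              (w.take k).getD p.2 0 < (w.take k).getD i 0 ∧
              (w.take k).getD i 0 < (w.take k).getD p.1 0)) := by
          simp only [Finset.mem_filter, Finset.mem_product, Finset.mem_range]
          refine ⟨⟨by omega, hek⟩, (block_down hk hL hek).mpr hb, hse, his, ?_, ?_⟩
          · rwa [hgets e hek, hgets i hik]
          · rwa [hgets s (by omega), hgets i hik]
        split_ifs with hcond
        · exact Finset.mem_insert_of_mem hmem'
        · exact hmem'
      · obtain ⟨hsk, hen⟩ := block_up hk hdec hL hb hek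
        have hcond : w.getD (w.length - 1) 0 < w.getD i 0 ∧ w.getD i 0 < w.getD k 0 ∧
            k < w.length - 1 := by
          refine ⟨by rw [← hen]; exact hv1, by rw [← hsk]; exact hv2, by omega⟩
        rw [if_pos hcond]
        have hpair : (s, e) = (k, w.length - 1) := by rw [hsk, hen]
        rw [hpair]
        exact Finset.mem_insert_self _ _
    · intro hmem
      have up : (s, e) ∈ ((Finset.range k ×ˢ Finset.range k).filter
          (fun p => isBlock (w.take k) p.1 p.2 ∧ p.1 < p.2 ∧ i < p.1 ∧
            (w.take k).getD p.2 0 < (w.take k).getD i 0 ∧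
            (w.take k).getD i 0 < (w.take k).getD p.1 0)) →
          (s < w.length ∧ e < w.length) ∧ isBlock w s e ∧ s < e ∧ i < s ∧
            w.getD e 0 < w.getD i 0 ∧ w.getD i 0 < w.getD s 0 := by
        intro hmem'
        simp only [Finset.mem_filter, Finset.mem_product, Finset.mem_range] at hmem'
        obtain ⟨⟨hs', he'⟩, hb', hse', his', hv1', hv2'⟩ := hmem'
        refine ⟨⟨by omega, by omega⟩, (block_down hk hL he').mp hb', hse', his', ?_, ?_⟩
        · rwa [hgets e he', hgets i hik] at hv1'
        · rwa [hgets s (by omega), hgets i hik] at hv2'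
      split_ifs at hmem with hcond
      · rcases Finset.mem_insert.mp hmem with heq | hmem'
        · have e1 : s = k := congrArg Prod.fst heq
          have e2 : e = w.length - 1 := congrArg Prod.snd heq
          subst e1
          subst e2
          exact ⟨⟨by omega, by omega⟩, block_last hk hdec hL, by omega, hik,
            hcond.1, hcond.2.1⟩
        · exact up hmem'
      · exact up hmem
  have hSw : remb w i = ((Finset.range w.length ×ˢ Finset.range w.length).filter
      (fun p => isBlock w p.1 p.2 ∧ p.1 < p.2 ∧ i < p.1 ∧
        w.getD p.2 0 < w.getD i 0 ∧ w.getD i 0 < w.getD p.1 0)).card := rfl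
  rw [hSw, key, hSu]
  split_ifs with hcond
  · have hnot : (k, w.length - 1) ∉ ((Finset.range k ×ˢ Finset.range k).filter
        (fun p => isBlock (w.take k) p.1 p.2 ∧ p.1 < p.2 ∧ i < p.1 ∧
          (w.take k).getD p.2 0 < (w.take k).getD i 0 ∧
          (w.take k).getD i 0 < (w.take k).getD p.1 0)) := by
      intro hmem
      simp only [Finset.mem_filter, Finset.mem_product, Finset.mem_range] at hmem
      omega
    rw [Finset.card_insert_of_notMem hnot]
  · rfl

/-- adjustment of a tuple letter when the final block is removed -/
def adjT (o c : ℕ) (P : Bool) (t : ℕ × ℕ × Bool × Bool × ℕ) : ℕ × ℕ × Bool × Bool × ℕ :=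
  (t.1, t.2.1, t.2.2.1, t.2.2.2.1, t.2.2.2.2 - if o < t.1 ∧ t.1 < c ∧ P = true then 1 else 0)

include hk hdec hL in
lemma tuple_strip {i : ℕ} (hik : i < k) :
    tupleLetter (w.take k) i =
      adjT (w.getD (w.length - 1) 0) (w.getD k 0) (decide (k < w.length - 1))
        (tupleLetter w i) := by
  have hul : (w.take k).length = k := by rw [List.length_take]; omega
  unfold tupleLetter adjT
  dsimp only
  simp only [Prod.mk.injEq]
  refine ⟨take_getD w hik, ?_, ?_, ?_, ?_⟩
  · unfold dupIndex
    congr 1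
    apply Finset.filter_congr
    intro j hj
    simp only [Finset.mem_range] at hj
    rw [take_getD w (by omega), take_getD w hik]
  · apply decide_eq_decide.mpr
    constructor
    · rintro ⟨h1, h2⟩
      refine ⟨h1, ?_⟩
      rwa [take_getD w hik, take_getD w (by omega)] at h2
    · rintro ⟨h1, h2⟩
      refine ⟨h1, ?_⟩
      rwa [take_getD w hik, take_getD w (by omega)]
  · apply decide_eq_decide.mpr
    rw [hul]
    constructor
    · rintro ⟨h1, h2⟩
      refine ⟨by omega, ?_⟩
      rwa [take_getD w h1, take_getD w hik] at h2
    · rintro ⟨h1, h2⟩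
      rcases Nat.lt_or_ge (i+1) k with h3 | h3
      · refine ⟨h3, ?_⟩
        rwa [take_getD w h3, take_getD w hik]
      · exfalso
        have hik1 : i + 1 = k := by omega
        rcases hL with h0 | hle
        · omega
        · rw [← hik1] at hle
          have e1 : i + 1 - 1 = i := by omega
          rw [e1] at hle
          rw [hik1] at h2
          rw [← hik1] at h2
          omega
  · rw [remb_strip hk hdec hL hik]
    simp only [decide_eq_true_eq]
    split_ifs with h1 h2
    any_goals omega

end Strip

/-- tuple letters at distinct positions differ -/
lemma tuple_inj {w : List ℕ} {i j : ℕ} (h : tupleLetter w i = tupleLetter w j) : i = j := by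
  obtain ⟨hv, hd, -, -, -⟩ := tuple_eq_iff.mp h
  exact pos_eq_of_key hv hd

lemma delta_prefix {w : List ℕ} {k : ℕ} (hk : k ≤ w.length) :
    (Finset.range k).image (tupleLetter w) =
      delta w \ ((Finset.range (w.length - k)).image (fun s => tupleLetter w (k + s))) := by
  ext t
  constructor
  · intro ht
    obtain ⟨i, hi, rfl⟩ := Finset.mem_image.mp ht
    rw [Finset.mem_range] at hi
    rw [Finset.mem_sdiff]
    refine ⟨mem_delta.mpr ⟨i, by omega, rfl⟩, ?_⟩
    intro hbad
    obtain ⟨s, hs, heq⟩ := Finset.mem_image.mp hbad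
    have := tuple_inj heq
    omega
  · intro ht
    rw [Finset.mem_sdiff] at ht
    obtain ⟨i, hi, rfl⟩ := mem_delta.mp ht.1
    refine Finset.mem_image.mpr ⟨i, Finset.mem_range.mpr ?_, rfl⟩
    by_contra hc
    push_neg at hc
    exact ht.2 (Finset.mem_image.mpr ⟨i - k, Finset.mem_range.mpr (by omega),
      by rw [show k + (i - k) = i by omega]⟩)

lemma delta_take {w : List ℕ} {k : ℕ} (hk : k < w.length)
    (hdec : ∀ s, k ≤ s → s + 1 < w.length → w.getD (s+1) 0 < w.getD s 0)
    (hL : k = 0 ∨ w.getD (k-1) 0 ≤ w.getD k 0) :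
    delta (w.take k) =
      (delta w \ ((Finset.range (w.length - k)).image (fun s => tupleLetter w (k + s)))).image
        (adjT (w.getD (w.length - 1) 0) (w.getD k 0) (decide (k < w.length - 1))) := by
  rw [← delta_prefix (le_of_lt hk), delta]
  have hul : (w.take k).length = k := by rw [List.length_take]; omega
  rw [hul, Finset.image_image]
  apply Finset.image_congr
  intro i hi
  rw [Finset.mem_coe, Finset.mem_range] at hi
  exact tuple_strip hk hdec hL hi

lemma suffix_tuples_eq {w₁ w₂ : List ℕ} (hperm : w₁.Perm w₂) (h : delta w₁ = delta w₂)
    {k : ℕ} (hk : k < w₁.length)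
    (hS : ∀ s, k ≤ s → s < w₁.length → w₁.getD s 0 = w₂.getD s 0)
    (hD : ∀ s, k ≤ s → s + 1 < w₁.length → w₁.getD (s+1) 0 < w₁.getD s 0) :
    (Finset.range (w₁.length - k)).image (fun s => tupleLetter w₁ (k + s)) =
      (Finset.range (w₂.length - k)).image (fun s => tupleLetter w₂ (k + s)) := by
  have hlen : w₂.length = w₁.length := hperm.length_eq.symm
  rw [hlen]
  apply Finset.image_congr
  intro s hs
  rw [Finset.mem_coe, Finset.mem_range] at hs
  exact suffix_tuple_eq hperm h (by omega)
    (fun s' h1 h2 => hS s' (by omega) h2)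
    (fun s' h1 h2 => hD s' (by omega) h2)

lemma delta_strip {w₁ w₂ : List ℕ} (hperm : w₁.Perm w₂) (h : delta w₁ = delta w₂)
    {k : ℕ} (hk : k < w₁.length)
    (hS : ∀ s, k ≤ s → s < w₁.length → w₁.getD s 0 = w₂.getD s 0)
    (hD : ∀ s, k ≤ s → s + 1 < w₁.length → w₁.getD (s+1) 0 < w₁.getD s 0)
    (hL1 : k = 0 ∨ w₁.getD (k-1) 0 ≤ w₁.getD k 0)
    (hL2 : k = 0 ∨ w₂.getD (k-1) 0 ≤ w₂.getD k 0) :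
    delta (w₁.take k) = delta (w₂.take k) := by
  have hlen : w₂.length = w₁.length := hperm.length_eq.symm
  have hk2 : k < w₂.length := by omega
  have hD2 : ∀ s, k ≤ s → s + 1 < w₂.length → w₂.getD (s+1) 0 < w₂.getD s 0 := by
    intro s h1 h2
    rw [hlen] at h2
    rw [← hS s h1 (by omega), ← hS (s+1) (by omega) (by omega)]
    exact hD s h1 h2
  have hsuff := suffix_tuples_eq hperm h hk hS hD
  rw [hlen] at hsuff
  rw [delta_take hk hD hL1, delta_take hk2 hD2 hL2, hlen, h, hsuff,
    ← hS (w₁.length - 1) (by omega) (by omega), ← hS k (le_refl k) hk]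

end DeltaInj

/-- `δ` is injective: two rearrangements of the same multiset with the same
4-tuple-letter set are equal. -/
theorem delta_injective (w₁ w₂ : List ℕ) (hperm : w₁.Perm w₂)
    (h : delta w₁ = delta w₂) : w₁ = w₂ := by
  classical
  suffices H : ∀ n (u₁ u₂ : List ℕ), u₁.length = n → u₁.Perm u₂ → delta u₁ = delta u₂ →
      u₁ = u₂ by
    exact H w₁.length w₁ w₂ rfl hperm h
  intro n
  induction n using Nat.strong_induction_on with
  | _ n IH =>
  intro w₁ w₂ hlen1 hperm h
  subst hlen1
  have hlen2 : w₂.length = w₁.length := hperm.length_eq.symm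
  rcases Nat.eq_zero_or_pos w₁.length with hn0 | hn1
  · have h1 : w₁ = [] := List.length_eq_zero_iff.mp hn0
    have h2 : w₂ = [] := List.length_eq_zero_iff.mp (by omega)
    rw [h1, h2]
  · have KEY : ∀ d t, 1 ≤ t → t + d = w₁.length →
        (∀ s, w₁.length - t ≤ s → s < w₁.length → w₁.getD s 0 = w₂.getD s 0) →
        (∀ s, w₁.length - t ≤ s → s + 1 < w₁.length → w₁.getD (s+1) 0 < w₁.getD s 0) →
        w₁ = w₂ := by
      intro d
      induction d with
      | zero =>
        intro t ht1 htn hS hD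
        apply List.ext_getElem hlen2.symm
        intro i h1 h2
        have e := hS i (by omega) h1
        rwa [List.getD_eq_getElem _ _ h1, List.getD_eq_getElem _ _ h2] at e
      | succ d IHd =>
        intro t ht1 htn hS hD
        have hpn : w₁.length - t < w₁.length := by omega
        have htup := DeltaInj.suffix_tuple_eq hperm h hpn hS hD
        obtain ⟨-, -, hbot, -, -⟩ := DeltaInj.tuple_eq_iff.mp htup
        by_cases hflag : 0 < w₁.length - t ∧
            w₁.getD (w₁.length - t) 0 < w₁.getD (w₁.length - t - 1) 0
        · -- the last block extends: the letters before the suffix also agree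
          obtain ⟨hpos, hz1⟩ := hflag
          have hflag2 := hbot.mp ⟨hpos, hz1⟩
          have hz2 : w₂.getD (w₂.length - t) 0 < w₂.getD (w₂.length - t - 1) 0 := by
            rw [hlen2]
            exact hflag2.2
          have hle1 := DeltaInj.ext_le hperm h ht1 (by omega) hS hD hz1 hz2
          have hS' : ∀ s, w₂.length - t ≤ s → s < w₂.length → w₂.getD s 0 = w₁.getD s 0 := by
            intro s a b
            rw [hlen2] at a b
            exact (hS s a b).symm
          have hD' : ∀ s, w₂.length - t ≤ s → s + 1 < w₂.length →
              w₂.getD (s+1) 0 < w₂.getD s 0 := by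
            intro s a b
            rw [hlen2] at a b
            rw [← hS s a (by omega), ← hS (s+1) (by omega) b]
            exact hD s a b
          have hle2 := DeltaInj.ext_le hperm.symm h.symm ht1 (by omega) hS' hD' hz2 hz1
          have hzeq : w₁.getD (w₁.length - t - 1) 0 = w₂.getD (w₂.length - t - 1) 0 :=
            le_antisymm hle2 hle1
          apply IHd (t+1) (by omega) (by omega)
          · intro s h1 h2
            rcases eq_or_lt_of_le h1 with h3 | h3
            · have e : s = w₁.length - t - 1 := by omega
              rw [e, hzeq]
              congr 1
              omega
            · exact hS s (by omega) h2
          · intro s h1 h2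
            rcases eq_or_lt_of_le h1 with h3 | h3
            · have e : s + 1 = w₁.length - t := by omega
              have e2 : s = w₁.length - t - 1 := by omega
              rw [e, e2]
              exact hz1
            · exact hD s (by omega) h2
        · -- the last block is complete: strip it
          have hL1 : w₁.length - t = 0 ∨
              w₁.getD (w₁.length - t - 1) 0 ≤ w₁.getD (w₁.length - t) 0 := by
            rcases Nat.eq_zero_or_pos (w₁.length - t) with h0 | hpos
            · exact Or.inl h0
            · right
              by_contra hc
              push_neg at hc
              exact hflag ⟨hpos, by omega⟩
          have hflag2 : ¬ (0 < w₁.length - t ∧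
              w₂.getD (w₁.length - t) 0 < w₂.getD (w₁.length - t - 1) 0) :=
            fun hc => hflag (hbot.mpr hc)
          have hL2 : w₁.length - t = 0 ∨
              w₂.getD (w₁.length - t - 1) 0 ≤ w₂.getD (w₁.length - t) 0 := by
            rcases Nat.eq_zero_or_pos (w₁.length - t) with h0 | hpos
            · exact Or.inl h0
            · right
              by_contra hc
              push_neg at hc
              exact hflag2 ⟨hpos, by omega⟩
          have hdel := DeltaInj.delta_strip hperm h hpn hS hD hL1 hL2
          have hdrop : w₁.drop (w₁.length - t) = w₂.drop (w₁.length - t) := by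
            apply List.ext_getElem (by simp [hlen2])
            intro i h1 h2
            have hi1 : w₁.length - t + i < w₁.length := by
              simp at h1
              omega
            have e := hS (w₁.length - t + i) (by omega) hi1
            rw [List.getD_eq_getElem _ _ hi1,
              List.getD_eq_getElem _ _ (by omega : w₁.length - t + i < w₂.length)] at e
            simpa using e
          have hpermtake : (w₁.take (w₁.length - t)).Perm (w₂.take (w₁.length - t)) := by
            have hp2 := hperm
            rw [← List.take_append_drop (w₁.length - t) w₁,
              ← List.take_append_drop (w₁.length - t) w₂, hdrop] at hp2
            exact (List.perm_append_right_iff _).mp hp2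
          have htake : w₁.take (w₁.length - t) = w₂.take (w₁.length - t) := by
            apply IH (w₁.length - t) (by omega) _ _ _ hpermtake hdel
            rw [List.length_take]
            omega
          calc w₁ = w₁.take (w₁.length - t) ++ w₁.drop (w₁.length - t) :=
                (List.take_append_drop _ _).symm
            _ = w₂.take (w₁.length - t) ++ w₂.drop (w₁.length - t) := by rw [htake, hdrop]
            _ = w₂ := List.take_append_drop _ _
    apply KEY (w₁.length - 1) 1 (le_refl 1) (by omega)
    · intro s h1 h2
      have e : s = w₁.length - 1 := by omega
      rw [e]
      have hlast := DeltaInj.last_eq hperm h (by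
        intro he
        rw [he] at hn1
        simp at hn1)
      rwa [hlen2] at hlast
    · intro s h1 h2
      exact absurd h2 (by omega)
end

section
/- Let k ≥ 1, let x ∈ {0,1}^k, and define f on indices {1,…,k} as follows: let the index sequence of zeros of x (in increasing order) be z_1 < … < z_s and of ones be o_1 < … < o_t. Let x' be the reversal of x. Define a new tuple by assigning, reading positions 1,…,k: if x'_i = 0 assign the next unused zero-index of x, else the next unused one-index of x. Then applying this construction twice returns the identity assignment; i.e., the induced permutation of {1,…,k} built from x equals the inverse of the permutation built from x' — the overall map is an involution. -/
open Finset

section Aux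

variable {k : ℕ}

private lemma card_filter_lt_emb (s : Finset (Fin k)) (q : Fin s.card) :
    (s.filter (· < s.orderEmbOfFin rfl q)).card = q := by
  set e := s.orderEmbOfFin rfl with he
  have himg : s.filter (· < e q) = (Finset.univ.filter (· < q)).image e := by
    ext a
    simp only [mem_filter, mem_image, mem_univ, true_and]
    constructor
    · rintro ⟨has, hlt⟩
      have : a ∈ Set.range e := by rw [he, Finset.range_orderEmbOfFin]; exact has
      obtain ⟨q', rfl⟩ := this
      exact ⟨q', e.lt_iff_lt.mp hlt, rfl⟩
    · rintro ⟨q', hq', rfl⟩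
      exact ⟨Finset.orderEmbOfFin_mem s rfl q', e.lt_iff_lt.mpr hq'⟩
  rw [himg, Finset.card_image_of_injective _ e.injective]
  have : (Finset.univ.filter (· < q)) = Finset.Iio q := by ext a; simp
  rw [this, Fin.card_Iio]

private lemma card_filter_gt_emb (s : Finset (Fin k)) (q : Fin s.card) :
    (s.filter (s.orderEmbOfFin rfl q < ·)).card = s.card - 1 - q := by
  set e := s.orderEmbOfFin rfl with he
  have himg : s.filter (e q < ·) = (Finset.univ.filter (q < ·)).image e := by
    ext a
    simp only [mem_filter, mem_image, mem_univ, true_and]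
    constructor
    · rintro ⟨has, hlt⟩
      have : a ∈ Set.range e := by rw [he, Finset.range_orderEmbOfFin]; exact has
      obtain ⟨q', rfl⟩ := this
      exact ⟨q', e.lt_iff_lt.mp hlt, rfl⟩
    · rintro ⟨q', hq', rfl⟩
      exact ⟨Finset.orderEmbOfFin_mem s rfl q', e.lt_iff_lt.mpr hq'⟩
  rw [himg, Finset.card_image_of_injective _ e.injective]
  have : (Finset.univ.filter (q < ·)) = Finset.Ioi q := by ext a; simp
  rw [this, Fin.card_Ioi]

/-- uniqueness: an element of `s` with rank-below `q` is `e q`. -/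
private lemma emb_eq_of_rank (s : Finset (Fin k)) (a : Fin k) (ha : a ∈ s) (q : Fin s.card)
    (hq : (s.filter (· < a)).card = q) : s.orderEmbOfFin rfl q = a := by
  have : a ∈ Set.range (s.orderEmbOfFin rfl) := by rw [Finset.range_orderEmbOfFin]; exact ha
  obtain ⟨q', rfl⟩ := this
  congr 1
  have := card_filter_lt_emb s q'
  rw [hq] at this
  exact Fin.ext this

private lemma revcount (i : Fin k) (P : Fin k → Prop) [DecidablePred P] :
    (Finset.univ.filter (fun i' : Fin k => i' < i ∧ P i'.rev)).card
      = ((Finset.univ.filter P).filter (i.rev < ·)).card := by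
  refine Finset.card_bij' (fun a _ => a.rev) (fun b _ => b.rev) ?_ ?_ ?_ ?_
  · intro a ha
    simp only [mem_filter, mem_univ, true_and] at ha ⊢
    exact ⟨ha.2, by rw [Fin.rev_lt_rev]; exact ha.1⟩
  · intro b hb
    simp only [mem_filter, mem_univ, true_and] at hb ⊢
    refine ⟨?_, by rw [Fin.rev_rev]; exact hb.1⟩
    have := hb.2
    rwa [← Fin.rev_lt_rev, Fin.rev_rev] at this
  · intro a _; exact Fin.rev_rev a
  · intro a _; exact Fin.rev_rev a

private lemma card_rev (P : Fin k → Prop) [DecidablePred P] :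
    (Finset.univ.filter (fun j : Fin k => P j.rev)).card
      = (Finset.univ.filter P).card := by
  refine Finset.card_bij' (fun a _ => a.rev) (fun b _ => b.rev) ?_ ?_ ?_ ?_
  · intro a ha; simp only [mem_filter, mem_univ, true_and] at ha ⊢; exact ha
  · intro b hb; simp only [mem_filter, mem_univ, true_and] at hb ⊢
    rw [Fin.rev_rev]; exact hb
  · intro a _; exact Fin.rev_rev a
  · intro a _; exact Fin.rev_rev a

end Aux

/-- The index assigned to output position `i` by the queue construction:
reading positions `1,…,k`, if the reversed tuple has a `0` (`false`) at `i` we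
pop the next unused index of `x`-value `false`, else the next unused index of
`x`-value `true`.  Concretely, it is the `r`-th smallest index `j` with
`x j = x (rev i)`, where `r` is the number of earlier positions `i' < i` with
`x (rev i') = x (rev i)`. -/
def buildIdx (k : ℕ) (x : Fin k → Bool) (i : Fin k) : ℕ :=
  (((Finset.univ.filter (fun j : Fin k => x j = x i.rev)).sort (· ≤ ·)).map Fin.val).getD
    ((Finset.univ.filter (fun i' : Fin k => i' < i ∧ x i'.rev = x i.rev)).card) 0

/-- The induced map on positions `Fin k`. -/
def tauMap (k : ℕ) (hk : 0 < k) (x : Fin k → Bool) (i : Fin k) : Fin k :=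
  ⟨buildIdx k x i % k, Nat.mod_lt _ hk⟩

section Main

variable {k : ℕ}

private lemma buildIdx_eq' (x : Fin k → Bool) (i : Fin k)
    (hr : ((Finset.univ.filter (fun i' : Fin k => i' < i ∧ x i'.rev = x i.rev)).card)
       < (Finset.univ.filter (fun j : Fin k => x j = x i.rev)).card) :
    buildIdx k x i
      = ((Finset.univ.filter (fun j : Fin k => x j = x i.rev)).orderEmbOfFin rfl ⟨_, hr⟩ : Fin k).val := by
  set s := Finset.univ.filter (fun j : Fin k => x j = x i.rev) with hs
  have hlen : ((s.sort (· ≤ ·)).map Fin.val).length = s.card := by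
    rw [List.length_map, Finset.length_sort]
  rw [buildIdx, List.getD_eq_getElem _ _ (by rw [hlen]; exact hr)]
  simp only [List.getElem_map]
  rfl

private lemma tauMap_eq (hk : 0 < k) (x : Fin k → Bool) (i : Fin k)
    (hr : ((Finset.univ.filter (fun i' : Fin k => i' < i ∧ x i'.rev = x i.rev)).card)
       < (Finset.univ.filter (fun j : Fin k => x j = x i.rev)).card) :
    tauMap k hk x i
      = (Finset.univ.filter (fun j : Fin k => x j = x i.rev)).orderEmbOfFin rfl ⟨_, hr⟩ := by
  ext
  simp only [tauMap, buildIdx_eq' x i hr]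
  exact Nat.mod_eq_of_lt (Fin.is_lt _)

private lemma tauMap_left (hk : 0 < k) (x : Fin k → Bool) (i : Fin k) :
    tauMap k hk (fun j => x j.rev) (tauMap k hk x i) = i := by
  set b := x i.rev with hb
  set s := Finset.univ.filter (fun j : Fin k => x j = b) with hs
  have hirev : i.rev ∈ s := by simp [hs, hb]
  -- the first count equals the rank-above of `i.rev` in `s`
  have hcount1 : (Finset.univ.filter (fun i' : Fin k => i' < i ∧ x i'.rev = b)).card
      = (s.filter (i.rev < ·)).card := revcount i (fun j => x j = b)
  have hr : (Finset.univ.filter (fun i' : Fin k => i' < i ∧ x i'.rev = b)).card < s.card := by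
    rw [hcount1]
    exact Finset.card_lt_card ⟨Finset.filter_subset _ _,
      fun hsub => absurd (Finset.mem_filter.mp (hsub hirev)).2 (lt_irrefl _)⟩
  have htau : tauMap k hk x i = s.orderEmbOfFin rfl ⟨_, hr⟩ := tauMap_eq hk x i hr
  set q : Fin s.card := ⟨_, hr⟩ with hq
  set τ : Fin k := s.orderEmbOfFin rfl q with hτ
  have hτs : τ ∈ s := Finset.orderEmbOfFin_mem s rfl q
  have hτb : x τ = b := (Finset.mem_filter.mp hτs).2
  rw [htau]
  -- second application
  have hb2 : x τ.rev.rev = b := by rw [Fin.rev_rev]; exact hτb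
  -- second count
  have hcount2 : (Finset.univ.filter (fun i' : Fin k => i' < τ ∧ x i'.rev.rev = x τ.rev.rev)).card
      = (q : ℕ) := by
    have hfe : Finset.univ.filter (fun i' : Fin k => i' < τ ∧ x i'.rev.rev = x τ.rev.rev)
        = s.filter (· < τ) := by
      ext a
      simp only [hs, mem_filter, mem_univ, true_and, Fin.rev_rev, hb2, hτb]
      tauto
    rw [hfe, hτ, card_filter_lt_emb s q]
  have hr2 : (Finset.univ.filter (fun i' : Fin k => i' < τ ∧ x i'.rev.rev = x τ.rev.rev)).card
      < (Finset.univ.filter (fun j : Fin k => x j.rev = x τ.rev.rev)).card := by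
    rw [hcount2]
    have : (Finset.univ.filter (fun j : Fin k => x j.rev = x τ.rev.rev)).card = s.card := by
      rw [hb2, hs]; exact card_rev (fun j => x j = b)
    rw [this]; exact q.is_lt
  have := tauMap_eq hk (fun j => x j.rev) τ hr2
  rw [this]
  -- now show the resulting element is `i` using uniqueness of rank
  set s₂ := Finset.univ.filter (fun j : Fin k => x j.rev = x τ.rev.rev) with hs₂
  apply emb_eq_of_rank s₂ i
  · simp only [hs₂, mem_filter, mem_univ, true_and, hb2]; exact hb.symm
  · -- rank-below of `i` in `s₂` equals the count
    have : (s₂.filter (· < i)).card = (s.filter (i.rev < ·)).card := by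
      refine Finset.card_bij' (fun a _ => a.rev) (fun c _ => c.rev) ?_ ?_ ?_ ?_
      · intro a ha
        simp only [hs₂, hs, mem_filter, mem_univ, true_and, hb2, hτb] at ha ⊢
        exact ⟨ha.1, by rw [Fin.rev_lt_rev]; exact ha.2⟩
      · intro c hc
        simp only [hs₂, hs, mem_filter, mem_univ, true_and, hb2, hτb, Fin.rev_rev] at hc ⊢
        refine ⟨hc.1, ?_⟩
        have := hc.2
        rwa [← Fin.rev_lt_rev, Fin.rev_rev] at this
      · intro a _; exact Fin.rev_rev a
      · intro a _; exact Fin.rev_rev a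
    rw [this]
    exact hcount1.symm.trans hcount2.symm

end Main

/-- The permutation built from `x` is inverse to the permutation built from the
reversal `x'` of `x`: performing the queue rearrangement twice is the identity. -/
theorem tauMap_involutive (k : ℕ) (hk : 0 < k) (x : Fin k → Bool) :
    (∀ i : Fin k, tauMap k hk (fun j => x j.rev) (tauMap k hk x i) = i)
    ∧ (∀ i : Fin k, tauMap k hk x (tauMap k hk (fun j => x j.rev) i) = i) := by
  constructor
  · exact fun i => tauMap_left hk x i
  · intro i
    have h := tauMap_left hk (fun j => x j.rev) i
    simpa only [Fin.rev_rev] using h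
end

section
/- Let φ be a bijection on the letters of a word (modeled as a map on the index set {1,…,n} of w = w_1…w_n preserving values and duplicate indices) such that each letter keeps its descent-bottom status but the descent-top statuses within each value class of size k are permuted by an index map i ↦ σ(i) with non-descent-top status of new i-th copy equal to old (k+1−i)-th copy. Then for every value v: #{(i,j) : i<j, w_i=w_j=v, w_i is a descent top in w} = #{(i,j) : i<j, images have value v, the j-th image is a descent top in the new word}. In pattern language: (\underline{21}2)|_{2=v} w = (2\underline{21})|_{2=v} w' and (2\underline{21})|_{2=v} w = (\underline{21}2)|_{2=v} w'. -/
/-- The (increasing) list of positions of the value `v` in `w`. -/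
def posList (w : List ℕ) (v : ℕ) : List ℕ :=
  (List.range w.length).filter (fun i => w.getD i 0 = v)

/-- Position `i` is a descent top of `w`. -/
def isDesTop (w : List ℕ) (i : ℕ) : Prop :=
  i + 1 < w.length ∧ w.getD (i + 1) 0 < w.getD i 0

/-- Position `i` is a descent bottom of `w`. -/
def isDesBot (w : List ℕ) (i : ℕ) : Prop :=
  0 < i ∧ i < w.length ∧ w.getD i 0 < w.getD (i - 1) 0

/-- `(\underline{21}2)|_{2=v}(w)`: pairs `i < j` of positions of value `v` with
`w_i` a descent top. -/
def pat212 (w : List ℕ) (v : ℕ) : ℕ :=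
  ((Finset.range w.length ×ˢ Finset.range w.length).filter
    (fun p => p.1 < p.2 ∧ w.getD p.1 0 = v ∧ w.getD p.2 0 = v ∧
      p.1 + 1 < w.length ∧ w.getD (p.1 + 1) 0 < w.getD p.1 0)).card

/-- `(2\underline{21})|_{2=v}(w)`: pairs `i < j` of positions of value `v` with
`w_j` a descent top. -/
def pat221 (w : List ℕ) (v : ℕ) : ℕ :=
  ((Finset.range w.length ×ˢ Finset.range w.length).filter
    (fun p => p.1 < p.2 ∧ w.getD p.1 0 = v ∧ w.getD p.2 0 = v ∧
      p.2 + 1 < w.length ∧ w.getD (p.2 + 1) 0 < w.getD p.2 0)).card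

lemma mem_posList {w : List ℕ} {v i : ℕ} :
    i ∈ posList w v ↔ i < w.length ∧ w.getD i 0 = v := by
  simp [posList, List.mem_filter, List.mem_range]

lemma posList_pairwise (w : List ℕ) (v : ℕ) :
    List.Pairwise (· < ·) (posList w v) :=
  List.Pairwise.filter _ List.pairwise_lt_range

lemma posList_getD_lt {w : List ℕ} {v a b : ℕ} (hab : a < b)
    (hb : b < (posList w v).length) :
    (posList w v).getD a 0 < (posList w v).getD b 0 := by
  have ha : a < (posList w v).length := hab.trans hb
  rw [List.getD_eq_getElem _ _ ha, List.getD_eq_getElem _ _ hb]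
  exact List.pairwise_iff_get.mp (posList_pairwise w v) ⟨a, ha⟩ ⟨b, hb⟩ hab

lemma posList_getD_mem {w : List ℕ} {v a : ℕ} (ha : a < (posList w v).length) :
    (posList w v).getD a 0 ∈ posList w v := by
  rw [List.getD_eq_getElem _ _ ha]
  exact List.getElem_mem _

/-- Transfer a pair-count over positions of value `v` to a count over indices
into `posList w v`. -/
lemma key (w : List ℕ) (v : ℕ) (P : ℕ × ℕ → Prop) [DecidablePred P] :
    ((Finset.range w.length ×ˢ Finset.range w.length).filter
      (fun p => p.1 < p.2 ∧ w.getD p.1 0 = v ∧ w.getD p.2 0 = v ∧ P p)).card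
    = ((Finset.range (posList w v).length ×ˢ Finset.range (posList w v).length).filter
      (fun q => q.1 < q.2 ∧ P ((posList w v).getD q.1 0, (posList w v).getD q.2 0))).card := by
  refine (Finset.card_bij
    (fun q _ => ((posList w v).getD q.1 0, (posList w v).getD q.2 0)) ?_ ?_ ?_).symm
  · rintro ⟨a, b⟩ hq
    simp only [Finset.mem_filter, Finset.mem_product, Finset.mem_range] at hq ⊢
    obtain ⟨⟨ha, hb⟩, hab, hP⟩ := hq
    have h1 := mem_posList.mp (posList_getD_mem ha)
    have h2 := mem_posList.mp (posList_getD_mem hb)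
    exact ⟨⟨h1.1, h2.1⟩, posList_getD_lt hab hb, h1.2, h2.2, hP⟩
  · rintro ⟨a, b⟩ hq ⟨c, d⟩ hq' h
    simp only [Finset.mem_filter, Finset.mem_product, Finset.mem_range] at hq hq'
    simp only [Prod.mk.injEq] at h ⊢
    constructor
    · rcases lt_trichotomy a c with h' | h' | h'
      · exact absurd h.1 (posList_getD_lt h' hq'.1.1).ne
      · exact h'
      · exact absurd h.1.symm (posList_getD_lt h' hq.1.1).ne
    · rcases lt_trichotomy b d with h' | h' | h'
      · exact absurd h.2 (posList_getD_lt h' hq'.1.2).ne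
      · exact h'
      · exact absurd h.2.symm (posList_getD_lt h' hq.1.2).ne
  · rintro ⟨i, j⟩ hp
    simp only [Finset.mem_filter, Finset.mem_product, Finset.mem_range] at hp
    obtain ⟨⟨hi, hj⟩, hij, hvi, hvj, hP⟩ := hp
    obtain ⟨⟨a, ha⟩, hia⟩ := List.mem_iff_get.mp (mem_posList.mpr ⟨hi, hvi⟩)
    obtain ⟨⟨b, hb⟩, hjb⟩ := List.mem_iff_get.mp (mem_posList.mpr ⟨hj, hvj⟩)
    have hga : (posList w v).getD a 0 = i := by
      rw [List.getD_eq_getElem _ _ ha]; exact hia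
    have hgb : (posList w v).getD b 0 = j := by
      rw [List.getD_eq_getElem _ _ hb]; exact hjb
    have hab : a < b := by
      rcases lt_trichotomy a b with h' | h' | h'
      · exact h'
      · exfalso; rw [h'] at hga; omega
      · exfalso; have := posList_getD_lt h' ha; rw [hga, hgb] at this; omega
    refine ⟨(a, b), ?_, ?_⟩
    · simp only [Finset.mem_filter, Finset.mem_product, Finset.mem_range]
      exact ⟨⟨ha, hb⟩, hab, by rw [hga, hgb]; exact hP⟩
    · simp only [Prod.mk.injEq]
      exact ⟨hga, hgb⟩

lemma length_posList_count (w : List ℕ) (v : ℕ) :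
    (posList w v).length = w.count v := by
  have hmap : (List.range w.length).map (fun i => w.getD i 0) = w := by
    apply List.ext_getElem
    · simp
    · intro i h1 h2
      simp only [List.getElem_map, List.getElem_range]
      rw [List.getD_eq_getElem _ _ h2]
  conv_rhs => rw [← hmap]
  rw [List.count_eq_countP, List.countP_map]
  rw [posList, ← List.countP_eq_length_filter]
  apply List.countP_congr
  intro i _
  simp [Function.comp]

lemma flipCount (k : ℕ) (T T' : ℕ → Prop) [DecidablePred T] [DecidablePred T']
    (h : ∀ b < k, T' b ↔ T (k - 1 - b)) :
    ((Finset.range k ×ˢ Finset.range k).filter (fun q => q.1 < q.2 ∧ T q.1)).card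
    = ((Finset.range k ×ˢ Finset.range k).filter (fun q => q.1 < q.2 ∧ T' q.2)).card := by
  refine Finset.card_nbij' (fun q => (k - 1 - q.2, k - 1 - q.1))
    (fun q => (k - 1 - q.2, k - 1 - q.1)) ?_ ?_ ?_ ?_
  · rintro ⟨a, b⟩ hq
    simp only [Finset.mem_coe, Finset.mem_filter, Finset.mem_product, Finset.mem_range] at hq ⊢
    refine ⟨⟨by omega, by omega⟩, by omega, ?_⟩
    rw [h _ (by omega)]
    have : k - 1 - (k - 1 - a) = a := by omega
    rw [this]
    exact hq.2.2
  · rintro ⟨a, b⟩ hq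
    simp only [Finset.mem_coe, Finset.mem_filter, Finset.mem_product, Finset.mem_range] at hq ⊢
    exact ⟨⟨by omega, by omega⟩, by omega, (h b (by omega)).mp hq.2.2⟩
  · rintro ⟨a, b⟩ hq
    simp only [Finset.mem_coe, Finset.mem_filter, Finset.mem_product, Finset.mem_range] at hq
    simp only [Prod.mk.injEq]
    omega
  · rintro ⟨a, b⟩ hq
    simp only [Finset.mem_coe, Finset.mem_filter, Finset.mem_product, Finset.mem_range] at hq
    simp only [Prod.mk.injEq]
    omega

/-- Suppose `w'` is a rearrangement of `w` such that, within each value class of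
size `k` (copies ordered left to right), the `i`-th copy in `w'` is a descent
top iff the `(k+1−i)`-th copy in `w` is a descent top, while corresponding
copies (same relative position) have the same descent-bottom status.  Then for
every value `v`:
`(\underline{21}2)|_{2=v} w = (2\underline{21})|_{2=v} w'` and
`(2\underline{21})|_{2=v} w = (\underline{21}2)|_{2=v} w'`. -/
theorem pattern_swap_under_value_class_reversal (w w' : List ℕ) (hperm : w.Perm w')
    (htop : ∀ v i, i < (posList w v).length →
      (isDesTop w' ((posList w' v).getD i 0) ↔
        isDesTop w ((posList w v).getD ((posList w v).length - 1 - i) 0)))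
    (hbot : ∀ v i, i < (posList w v).length →
      (isDesBot w' ((posList w' v).getD i 0) ↔
        isDesBot w ((posList w v).getD i 0))) :
    ∀ v : ℕ, pat212 w v = pat221 w' v ∧ pat221 w v = pat212 w' v := by
  intro v
  have hk : (posList w' v).length = (posList w v).length := by
    rw [length_posList_count, length_posList_count, hperm.count_eq]
  set k := (posList w v).length with hkdef
  have hT : ∀ b < k, isDesTop w' ((posList w' v).getD b 0) ↔
      isDesTop w ((posList w v).getD (k - 1 - b) 0) := fun b hb => htop v b hb
  constructor
  · rw [pat212, key w v (fun p => p.1 + 1 < w.length ∧ w.getD (p.1 + 1) 0 < w.getD p.1 0),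
      pat221, key w' v (fun p => p.2 + 1 < w'.length ∧ w'.getD (p.2 + 1) 0 < w'.getD p.2 0),
      hk]
    refine flipCount k
      (fun i => (posList w v).getD i 0 + 1 < w.length ∧
        w.getD ((posList w v).getD i 0 + 1) 0 < w.getD ((posList w v).getD i 0) 0)
      (fun i => (posList w' v).getD i 0 + 1 < w'.length ∧
        w'.getD ((posList w' v).getD i 0 + 1) 0 < w'.getD ((posList w' v).getD i 0) 0)
      (fun b hb => hT b hb)
  · rw [pat221, key w v (fun p => p.2 + 1 < w.length ∧ w.getD (p.2 + 1) 0 < w.getD p.2 0),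
      pat212, key w' v (fun p => p.1 + 1 < w'.length ∧ w'.getD (p.1 + 1) 0 < w'.getD p.1 0),
      hk]
    refine (flipCount k
      (fun i => (posList w' v).getD i 0 + 1 < w'.length ∧
        w'.getD ((posList w' v).getD i 0 + 1) 0 < w'.getD ((posList w' v).getD i 0) 0)
      (fun i => (posList w v).getD i 0 + 1 < w.length ∧
        w.getD ((posList w v).getD i 0 + 1) 0 < w.getD ((posList w v).getD i 0) 0)
      ?_).symm
    intro b hb
    have h1 : isDesTop w ((posList w v).getD b 0) ↔
        isDesTop w' ((posList w' v).getD (k - 1 - b) 0) := by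
      rw [hT (k - 1 - b) (by omega)]
      have : k - 1 - (k - 1 - b) = b := by omega
      rw [this]
    exact h1
end
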